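/- arXiv:1508.02265 — 6 statements merged into one kernel-verified Lean document; each statement's English description precedes it below -/
import Mathlib

section
/- The semigroup SL₂ℕ of 2×2 integer matrices with nonnegative entries and determinant 1 is the free semigroup generated by the two matrices [[1,1],[0,1]] and [[1,0],[1,1]]; that is, every element of SL₂ℕ other than the identity can be written uniquely as a finite product of these two generators. -/
/-!
Left multiplication by `[[1,1],[0,1]]` adds the second row to the first, and by `[[1,0],[1,1]]`
adds the first row to the second. In a product `gen1 * B` with `B ∈ SL₂ℕ` the first row therefore
dominates the second entrywise, in `gen2 * B` the second dominates the first, and both cannot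
happen since the rows of a matrix of determinant 1 differ. So the first letter of a word is read
off its product, and words are determined by their products. Conversely, the determinant condition
forces the rows of any `A ∈ SL₂ℕ`, `A ≠ 1`, to be comparable, so one of the generators can be
peeled off, lowering the sum of the entries.
-/

open Matrix

/-- The monoid `SL₂ℕ` of 2×2 integer matrices with nonnegative entries
and determinant 1. -/
def SL2N : Set (Matrix (Fin 2) (Fin 2) ℤ) :=
  {A | (∀ i j, 0 ≤ A i j) ∧ A.det = 1}

/-- The generator `[[1,1],[0,1]]`. -/
def gen1 : Matrix (Fin 2) (Fin 2) ℤ := !![1, 1; 0, 1]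

/-- The generator `[[1,0],[1,1]]`. -/
def gen2 : Matrix (Fin 2) (Fin 2) ℤ := !![1, 0; 1, 1]

def IsGenWord (l : List (Matrix (Fin 2) (Fin 2) ℤ)) : Prop :=
  ∀ M ∈ l, M = gen1 ∨ M = gen2

section

variable {A B C : Matrix (Fin 2) (Fin 2) ℤ}

lemma det_gen1 : gen1.det = 1 := by simp [gen1, det_fin_two_of]

lemma det_gen2 : gen2.det = 1 := by simp [gen2, det_fin_two_of]

lemma gen1_mul_row_zero : (gen1 * B) 0 = B 0 + B 1 := by
  ext j; simp [gen1, mul_apply, Fin.sum_univ_two]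

lemma gen1_mul_row_one : (gen1 * B) 1 = B 1 := by
  ext j; simp [gen1, mul_apply, Fin.sum_univ_two]

lemma gen2_mul_row_zero : (gen2 * B) 0 = B 0 := by
  ext j; simp [gen2, mul_apply, Fin.sum_univ_two]

lemma gen2_mul_row_one : (gen2 * B) 1 = B 0 + B 1 := by
  ext j; simp [gen2, mul_apply, Fin.sum_univ_two]

lemma gen1_mem_SL2N : gen1 ∈ SL2N :=
  ⟨by simp [gen1, Fin.forall_fin_two], det_gen1⟩

lemma gen2_mem_SL2N : gen2 ∈ SL2N :=
  ⟨by simp [gen2, Fin.forall_fin_two], det_gen2⟩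

lemma one_mem_SL2N : (1 : Matrix (Fin 2) (Fin 2) ℤ) ∈ SL2N :=
  ⟨by simp [Fin.forall_fin_two], det_one⟩

lemma mul_mem_SL2N (hA : A ∈ SL2N) (hB : B ∈ SL2N) : A * B ∈ SL2N := by
  refine ⟨fun i j => ?_, by rw [det_mul, hA.2, hB.2, one_mul]⟩
  rw [mul_apply, Fin.sum_univ_two]
  have := hA.1 i 0; have := hA.1 i 1; have := hB.1 0 j; have := hB.1 1 j
  positivity

lemma mem_SL2N_of_eq_gen {g : Matrix (Fin 2) (Fin 2) ℤ} (hg : g = gen1 ∨ g = gen2) : g ∈ SL2N :=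
  hg.elim (· ▸ gen1_mem_SL2N) (· ▸ gen2_mem_SL2N)

lemma isGenWord_cons {g : Matrix (Fin 2) (Fin 2) ℤ} {l : List (Matrix (Fin 2) (Fin 2) ℤ)} :
    IsGenWord (g :: l) ↔ (g = gen1 ∨ g = gen2) ∧ IsGenWord l :=
  List.forall_mem_cons

lemma IsGenWord.prod_mem_SL2N {l : List (Matrix (Fin 2) (Fin 2) ℤ)} (hl : IsGenWord l) :
    l.prod ∈ SL2N :=
  List.prod_induction _ (fun _ _ => mul_mem_SL2N) one_mem_SL2N fun M hM =>
    mem_SL2N_of_eq_gen (hl M hM)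

lemma isUnit_of_mem_SL2N (hA : A ∈ SL2N) : IsUnit A :=
  (isUnit_iff_isUnit_det A).2 (hA.2 ▸ isUnit_one)

lemma row_ne_zero_of_mem_SL2N (hA : A ∈ SL2N) (i : Fin 2) : A i ≠ 0 := fun h => by
  simpa [hA.2] using det_eq_zero_of_row_eq_zero i (congrFun h)

lemma row_zero_ne_row_one_of_mem_SL2N (hA : A ∈ SL2N) : A 0 ≠ A 1 := fun h => by
  simpa [hA.2] using det_zero_of_row_eq (by decide : (0 : Fin 2) ≠ 1) h

lemma gen1_mul_row_one_le (hB : B ∈ SL2N) : (gen1 * B) 1 ≤ (gen1 * B) 0 := by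
  rw [gen1_mul_row_zero, gen1_mul_row_one]
  exact le_add_of_nonneg_left (hB.1 0)

lemma gen2_mul_row_zero_le (hB : B ∈ SL2N) : (gen2 * B) 0 ≤ (gen2 * B) 1 := by
  rw [gen2_mul_row_zero, gen2_mul_row_one]
  exact le_add_of_nonneg_right (hB.1 1)

lemma gen1_mul_ne_gen2_mul (hB : B ∈ SL2N) (hC : C ∈ SL2N) : gen1 * B ≠ gen2 * C := fun h =>
  row_zero_ne_row_one_of_mem_SL2N (mul_mem_SL2N gen2_mem_SL2N hC) <|
    le_antisymm (gen2_mul_row_zero_le hC) (h ▸ gen1_mul_row_one_le hB)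

lemma gen1_mul_ne_one (hB : B ∈ SL2N) : gen1 * B ≠ 1 := fun h => by
  simpa [h, Pi.le_def] using gen1_mul_row_one_le hB

lemma gen2_mul_ne_one (hB : B ∈ SL2N) : gen2 * B ≠ 1 := fun h => by
  simpa [h, Pi.le_def] using gen2_mul_row_zero_le hB

lemma IsGenWord.prod_cons_ne_one {g : Matrix (Fin 2) (Fin 2) ℤ}
    {l : List (Matrix (Fin 2) (Fin 2) ℤ)} (hl : IsGenWord (g :: l)) : (g :: l).prod ≠ 1 := by
  obtain ⟨rfl | rfl, ht⟩ := isGenWord_cons.1 hl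
  · exact gen1_mul_ne_one ht.prod_mem_SL2N
  · exact gen2_mul_ne_one ht.prod_mem_SL2N

lemma eq_of_gen_mul_eq_gen_mul {g g' : Matrix (Fin 2) (Fin 2) ℤ} (hg : g = gen1 ∨ g = gen2)
    (hg' : g' = gen1 ∨ g' = gen2) (hB : B ∈ SL2N) (hC : C ∈ SL2N) (h : g * B = g' * C) :
    g = g' := by
  rcases hg with rfl | rfl <;> rcases hg' with rfl | rfl
  · rfl
  · exact absurd h (gen1_mul_ne_gen2_mul hB hC)
  · exact absurd h.symm (gen1_mul_ne_gen2_mul hC hB)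
  · rfl

lemma IsGenWord.eq_of_prod_eq {l₁ l₂ : List (Matrix (Fin 2) (Fin 2) ℤ)} (h₁ : IsGenWord l₁)
    (h₂ : IsGenWord l₂) (h : l₁.prod = l₂.prod) : l₁ = l₂ := by
  induction l₁ generalizing l₂ with
  | nil =>
    cases l₂ with
    | nil => rfl
    | cons g t => exact absurd h.symm h₂.prod_cons_ne_one
  | cons g t ih =>
    cases l₂ with
    | nil => exact absurd h h₁.prod_cons_ne_one
    | cons g' t' =>
      obtain ⟨hg, ht⟩ := isGenWord_cons.1 h₁
      obtain ⟨hg', ht'⟩ := isGenWord_cons.1 h₂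
      rw [List.prod_cons, List.prod_cons] at h
      obtain rfl := eq_of_gen_mul_eq_gen_mul hg hg' ht.prod_mem_SL2N ht'.prod_mem_SL2N h
      rw [ih ht ht' ((isUnit_of_mem_SL2N (mem_SL2N_of_eq_gen hg)).mul_left_cancel h)]

lemma row_le_or_le_of_mem_SL2N (hA : A ∈ SL2N) (h1 : A ≠ 1) : A 1 ≤ A 0 ∨ A 0 ≤ A 1 := by
  obtain ⟨hnn, hdet⟩ := hA
  rw [det_fin_two] at hdet
  have := hnn 0 0; have := hnn 0 1; have := hnn 1 0; have := hnn 1 1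
  have h_det_neg : ¬ (A 0 0 < A 1 0 ∧ A 1 1 < A 0 1) := fun ⟨h, h'⟩ => by nlinarith
  have h_one : ¬ (A 1 0 < A 0 0 ∧ A 0 1 < A 1 1) := fun ⟨h, h'⟩ => h1 <| by
    have hb : A 0 1 = 0 := by nlinarith
    have hc : A 1 0 = 0 := by nlinarith
    have ha : A 0 0 = 1 := by nlinarith
    have hd : A 1 1 = 1 := by nlinarith
    ext i j; fin_cases i <;> fin_cases j <;> simp [ha, hb, hc, hd]
  simp only [Pi.le_def, Fin.forall_fin_two]
  omega

lemma exists_gen1_mul_eq (hA : A ∈ SL2N) (h : A 1 ≤ A 0) : ∃ B ∈ SL2N, gen1 * B = A := by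
  have hAB : gen1 * of ![A 0 - A 1, A 1] = A := by
    ext i : 1; fin_cases i <;> simp [gen1_mul_row_zero, gen1_mul_row_one]
  refine ⟨_, ⟨?_, ?_⟩, hAB⟩
  · intro i j; fin_cases i <;> simp [h j, hA.1 1 j]
  · simpa [det_mul, det_gen1, hA.2] using congrArg det hAB

lemma exists_gen2_mul_eq (hA : A ∈ SL2N) (h : A 0 ≤ A 1) : ∃ B ∈ SL2N, gen2 * B = A := by
  have hAB : gen2 * of ![A 0, A 1 - A 0] = A := by
    ext i : 1; fin_cases i <;> simp [gen2_mul_row_zero, gen2_mul_row_one]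
  refine ⟨_, ⟨?_, ?_⟩, hAB⟩
  · intro i j; fin_cases i <;> simp [h j, hA.1 0 j]
  · simpa [det_mul, det_gen2, hA.2] using congrArg det hAB

lemma sum_row_pos_of_mem_SL2N (hA : A ∈ SL2N) (i : Fin 2) : 0 < ∑ j, A i j := by
  obtain ⟨j, hj⟩ := Function.ne_iff.1 (row_ne_zero_of_mem_SL2N hA i)
  exact Finset.sum_pos' (fun j _ => hA.1 i j) ⟨j, Finset.mem_univ j, (hA.1 i j).lt_of_ne' hj⟩

lemma sum_entries_lt_gen1_mul (hB : B ∈ SL2N) :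
    (∑ i, ∑ j, B i j).toNat < (∑ i, ∑ j, (gen1 * B) i j).toNat := by
  have := sum_row_pos_of_mem_SL2N hB 0
  have := sum_row_pos_of_mem_SL2N hB 1
  simp only [Fin.sum_univ_two, gen1_mul_row_zero, gen1_mul_row_one, Pi.add_apply] at *
  omega

lemma sum_entries_lt_gen2_mul (hB : B ∈ SL2N) :
    (∑ i, ∑ j, B i j).toNat < (∑ i, ∑ j, (gen2 * B) i j).toNat := by
  have := sum_row_pos_of_mem_SL2N hB 0
  have := sum_row_pos_of_mem_SL2N hB 1
  simp only [Fin.sum_univ_two, gen2_mul_row_zero, gen2_mul_row_one, Pi.add_apply] at *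
  omega

end

theorem exists_isGenWord_prod_eq (A : Matrix (Fin 2) (Fin 2) ℤ) (hA : A ∈ SL2N) :
    ∃ l, IsGenWord l ∧ l.prod = A := by
  by_cases h1 : A = 1
  · exact ⟨[], by simp [IsGenWord], h1.symm⟩
  rcases row_le_or_le_of_mem_SL2N hA h1 with h | h
  · obtain ⟨B, hB, hBA⟩ := exists_gen1_mul_eq hA h
    have h_dec := hBA ▸ sum_entries_lt_gen1_mul hB
    obtain ⟨l, hl, hlB⟩ := exists_isGenWord_prod_eq B hB
    exact ⟨gen1 :: l, isGenWord_cons.2 ⟨.inl rfl, hl⟩, by rw [List.prod_cons, hlB, hBA]⟩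
  · obtain ⟨B, hB, hBA⟩ := exists_gen2_mul_eq hA h
    have h_dec := hBA ▸ sum_entries_lt_gen2_mul hB
    obtain ⟨l, hl, hlB⟩ := exists_isGenWord_prod_eq B hB
    exact ⟨gen2 :: l, isGenWord_cons.2 ⟨.inr rfl, hl⟩, by rw [List.prod_cons, hlB, hBA]⟩
termination_by (∑ i, ∑ j, A i j).toNat
decreasing_by all_goals assumption

/-- `SL₂ℕ` is the free semigroup on the two elementary generators: every
element other than the identity is a product of the generators in a unique way. -/
theorem sl2n_free_semigroup :
    ∀ A ∈ SL2N, A ≠ 1 →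
      ∃! l : List (Matrix (Fin 2) (Fin 2) ℤ),
        l ≠ [] ∧ (∀ M ∈ l, M = gen1 ∨ M = gen2) ∧ l.prod = A := by
  intro A hA hA1
  obtain ⟨l, hl, rfl⟩ := exists_isGenWord_prod_eq A hA
  refine ⟨l, ⟨?_, hl, rfl⟩, fun l' ⟨_, hl', h⟩ => IsGenWord.eq_of_prod_eq hl' hl h⟩
  rintro rfl
  exact hA1 List.prod_nil
end

section
/- The action of SL₂ℕ on the set of pairs of positive integers ℕ₊² (by matrix-vector multiplication) is free: if A·v = B·v for A, B ∈ SL₂ℕ and v a vector with both entries positive integers, then A = B. -/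
open Matrix

/-- A row with nonnegative entries, not both zero, dotted with a positive
vector is positive. -/
lemma sl2n_rowpos (a b v0 v1 : ℤ) (ha : 0 ≤ a) (hb : 0 ≤ b)
    (hv0 : 1 ≤ v0) (hv1 : 1 ≤ v1) (hab : 1 ≤ a + b) :
    1 ≤ a * v0 + b * v1 := by
  nlinarith [mul_le_mul_of_nonneg_left hv0 ha, mul_le_mul_of_nonneg_left hv1 hb]

/-- The key cross identity `(a-e)·P1 = (c-g2)·P0`. -/
lemma sl2n_cross (a b c d e f g2 h v0 v1 : ℤ)
    (hv0 : 1 ≤ v0)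
    (H1 : a*v0 + b*v1 = e*v0 + f*v1)
    (H2 : c*v0 + d*v1 = g2*v0 + h*v1)
    (H3 : a*d - b*c = 1) (H4 : e*h - f*g2 = 1) :
    (a - e) * (c*v0 + d*v1) = (c - g2) * (a*v0 + b*v1) := by
  -- first: v0 * det(A - B) = 0
  have hd0 : v0 * ((a-e)*(d-h) - (b-f)*(c-g2)) = 0 := by
    linear_combination (d-h)*H1 - (b-f)*H2
  have hdet : (a-e)*(d-h) - (b-f)*(c-g2) = 0 := by
    rcases mul_eq_zero.1 hd0 with h' | h'
    · linarith
    · exact h'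
  linear_combination v1*H3 - v1*H4 - v1*hdet - e*H2 + g2*H1 + (a-e)*H2 - (c-g2)*H1

/-- Main scalar lemma: the strict case `e < a` is impossible. -/
lemma sl2n_key (a b c d e f g2 h v0 v1 : ℤ)
    (ha : 0 ≤ a) (hb : 0 ≤ b) (hc : 0 ≤ c) (hd : 0 ≤ d)
    (he : 0 ≤ e) (hf : 0 ≤ f) (hg : 0 ≤ g2) (hh : 0 ≤ h)
    (hv0 : 1 ≤ v0) (hv1 : 1 ≤ v1)
    (H1 : a*v0 + b*v1 = e*v0 + f*v1)
    (H2 : c*v0 + d*v1 = g2*v0 + h*v1)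
    (H3 : a*d - b*c = 1) (H4 : e*h - f*g2 = 1)
    (hae : e < a) : False := by
  have hC := sl2n_cross a b c d e f g2 h v0 v1 hv0 H1 H2 H3 H4
  have hab : 1 ≤ a + b := by
    by_contra h'
    push_neg at h'
    have ha0 : a = 0 := by omega
    have hb0 : b = 0 := by omega
    rw [ha0, hb0] at H3; simp at H3
  have hcd : 1 ≤ c + d := by
    by_contra h'
    push_neg at h'
    have hc0 : c = 0 := by omega
    have hd0 : d = 0 := by omega
    rw [hc0, hd0] at H3; simp at H3
  have hP0 : 1 ≤ a*v0 + b*v1 := sl2n_rowpos a b v0 v1 ha hb hv0 hv1 hab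
  have hP1 : 1 ≤ c*v0 + d*v1 := sl2n_rowpos c d v0 v1 hc hd hv0 hv1 hcd
  -- from the cross identity, c - g2 ≥ 1
  have hD10 : 1 ≤ c - g2 := by nlinarith
  -- key identity
  have hI : (d*(a-e) - b*(c-g2)) * (c*v0 + d*v1) = (c - g2) * v0 := by
    linear_combination d*hC + (c - g2)*v0*H3
  have hST : 1 ≤ d*(a-e) - b*(c-g2) := by nlinarith
  have h5 : c*v0 + d*v1 ≤ (d*(a-e) - b*(c-g2)) * (c*v0 + d*v1) :=
    le_mul_of_one_le_left (by linarith) hST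
  have h6 : c*v0 + d*v1 ≤ (c - g2)*v0 := by linarith [hI ▸ h5]
  have hd0 : d = 0 := by nlinarith
  rw [hd0] at H3
  nlinarith [mul_nonneg hb hc]

/-- The action of `SL₂ℕ` on vectors with positive integer entries is free:
if `A·v = B·v` then `A = B`. -/
theorem sl2n_action_free (A B : Matrix (Fin 2) (Fin 2) ℤ)
    (hA : A ∈ SL2N) (hB : B ∈ SL2N) (v : Fin 2 → ℤ)
    (hv0 : 0 < v 0) (hv1 : 0 < v 1)
    (h : A.mulVec v = B.mulVec v) : A = B := by
  obtain ⟨hApos, hAdet⟩ := hA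
  obtain ⟨hBpos, hBdet⟩ := hB
  rw [Matrix.det_fin_two] at hAdet hBdet
  have H1 : A 0 0 * v 0 + A 0 1 * v 1 = B 0 0 * v 0 + B 0 1 * v 1 := by
    have := congrFun h 0
    simpa [Matrix.mulVec, dotProduct, Fin.sum_univ_two] using this
  have H2 : A 1 0 * v 0 + A 1 1 * v 1 = B 1 0 * v 0 + B 1 1 * v 1 := by
    have := congrFun h 1
    simpa [Matrix.mulVec, dotProduct, Fin.sum_univ_two] using this
  have hv0' : 1 ≤ v 0 := hv0
  have hv1' : 1 ≤ v 1 := hv1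
  have hA3 : A 0 0 * A 1 1 - A 0 1 * A 1 0 = 1 := by linarith
  have hB4 : B 0 0 * B 1 1 - B 0 1 * B 1 0 = 1 := by linarith
  -- a = e
  have hae : A 0 0 = B 0 0 := by
    rcases lt_trichotomy (A 0 0) (B 0 0) with h' | h' | h'
    · exact absurd (sl2n_key (B 0 0) (B 0 1) (B 1 0) (B 1 1)
        (A 0 0) (A 0 1) (A 1 0) (A 1 1) (v 0) (v 1)
        (hBpos 0 0) (hBpos 0 1) (hBpos 1 0) (hBpos 1 1)
        (hApos 0 0) (hApos 0 1) (hApos 1 0) (hApos 1 1)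
        hv0' hv1' H1.symm H2.symm hB4 hA3 h') (fun x => x)
    · exact h'
    · exact absurd (sl2n_key (A 0 0) (A 0 1) (A 1 0) (A 1 1)
        (B 0 0) (B 0 1) (B 1 0) (B 1 1) (v 0) (v 1)
        (hApos 0 0) (hApos 0 1) (hApos 1 0) (hApos 1 1)
        (hBpos 0 0) (hBpos 0 1) (hBpos 1 0) (hBpos 1 1)
        hv0' hv1' H1 H2 hA3 hB4 h') (fun x => x)
  have hC := sl2n_cross (A 0 0) (A 0 1) (A 1 0) (A 1 1)
    (B 0 0) (B 0 1) (B 1 0) (B 1 1) (v 0) (v 1) hv0' H1 H2 hA3 hB4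
  have hab : 1 ≤ A 0 0 + A 0 1 := by
    by_contra h'
    push_neg at h'
    have p0 := hApos 0 0
    have p1 := hApos 0 1
    have h1 : A 0 0 = 0 := by omega
    have h2 : A 0 1 = 0 := by omega
    rw [h1, h2] at hA3; simp at hA3
  have hP0 : 1 ≤ A 0 0 * v 0 + A 0 1 * v 1 :=
    sl2n_rowpos _ _ _ _ (hApos 0 0) (hApos 0 1) hv0' hv1' hab
  have hcg : A 1 0 = B 1 0 := by
    have hz : (A 1 0 - B 1 0) * (A 0 0 * v 0 + A 0 1 * v 1) = 0 := by
      linear_combination (A 1 0 * v 0 + A 1 1 * v 1) * hae - hC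
    rcases mul_eq_zero.1 hz with h' | h'
    · linarith
    · linarith
  have hbf : A 0 1 = B 0 1 := by
    have : (A 0 1 - B 0 1) * v 1 = 0 := by linear_combination H1 - v 0 * hae
    rcases mul_eq_zero.1 this with h' | h'
    · linarith
    · linarith
  have hdh : A 1 1 = B 1 1 := by
    have : (A 1 1 - B 1 1) * v 1 = 0 := by linear_combination H2 - v 0 * hcg
    rcases mul_eq_zero.1 this with h' | h'
    · linarith
    · linarith
  ext i j
  fin_cases i <;> fin_cases j <;> assumption
end

section
/- A pair (a,b) of positive integers belongs to the SL₂ℕ-orbit of a pair (a₀,b₀) of positive integers if and only if, when running the subtractive Euclidean algorithm starting from (a,b) (repeatedly replacing the larger coordinate by the difference of the two coordinates, as long as the coordinates are distinct and positive), one passes through the pair (a₀,b₀). -/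
open Matrix

/-- The `SL₂ℕ`-orbit of a vector. -/
def SL2Norbit (v : Fin 2 → ℤ) : Set (Fin 2 → ℤ) :=
  {w | ∃ A ∈ SL2N, w = A.mulVec v}

/-- One step of the subtractive Euclidean algorithm: replace the larger
coordinate by the difference, provided both coordinates are positive and distinct. -/
def euclidStep : (ℤ × ℤ) → (ℤ × ℤ) → Prop := fun p q =>
  (0 < p.2 ∧ p.2 < p.1 ∧ q = (p.1 - p.2, p.2)) ∨
  (0 < p.1 ∧ p.1 < p.2 ∧ q = (p.1, p.2 - p.1))

/-!
Every matrix of `SL₂ℕ` other than the identity has one row dominating the other entrywise, so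
it factors as `L * B` or `R * B` with `L = !![1, 1; 0, 1]`, `R = !![1, 0; 1, 1]` and `B ∈ SL₂ℕ`
of smaller entry sum; hence `SL₂ℕ` is the monoid generated by `L` and `R`. On positive vectors,
`L` and `R` undo the two kinds of subtractive Euclidean steps, so the orbit of `v` under this
monoid consists exactly of the pairs from which the algorithm reaches `v`.
-/

namespace SL2N

def L : Matrix (Fin 2) (Fin 2) ℤ := !![1, 1; 0, 1]

def R : Matrix (Fin 2) (Fin 2) ℤ := !![1, 0; 1, 1]

def submonoid : Submonoid (Matrix (Fin 2) (Fin 2) ℤ) where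
  carrier := SL2N
  mul_mem' {A B} hA hB :=
    ⟨fun i j => mul_apply (M := A) ▸
      Finset.sum_nonneg fun k _ => mul_nonneg (hA.1 i k) (hB.1 k j),
    by rw [det_mul, hA.2, hB.2, one_mul]⟩
  one_mem' := ⟨fun i j => by rw [one_apply]; split_ifs <;> simp, det_one⟩

@[simp]
lemma mem_submonoid {A : Matrix (Fin 2) (Fin 2) ℤ} : A ∈ submonoid ↔ A ∈ SL2N := Iff.rfl

lemma L_mem : L ∈ SL2N :=
  ⟨by simp [L, Fin.forall_fin_two], by simp [L, det_fin_two_of]⟩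

lemma R_mem : R ∈ SL2N :=
  ⟨by simp [R, Fin.forall_fin_two], by simp [R, det_fin_two_of]⟩

lemma L_mulVec (v : Fin 2 → ℤ) : L *ᵥ v = ![v 0 + v 1, v 1] := by
  ext i; fin_cases i <;> simp [L, mulVec, dotProduct, Fin.sum_univ_two]

lemma R_mulVec (v : Fin 2 → ℤ) : R *ᵥ v = ![v 0, v 0 + v 1] := by
  ext i; fin_cases i <;> simp [R, mulVec, dotProduct, Fin.sum_univ_two]

variable {A : Matrix (Fin 2) (Fin 2) ℤ}

lemma row_sum_pos (hA : A ∈ SL2N) (i : Fin 2) : 0 < A i 0 + A i 1 := by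
  obtain ⟨hnn, hdet⟩ := hA
  rw [det_fin_two] at hdet
  revert i
  refine Fin.forall_fin_two.2 ⟨?_, ?_⟩ <;> nlinarith [hnn 0 0, hnn 0 1, hnn 1 0, hnn 1 1]

lemma mulVec_pos (hA : A ∈ SL2N) {v : Fin 2 → ℤ} (hv : ∀ i, 0 < v i) (i : Fin 2) :
    0 < (A *ᵥ v) i := by
  have := row_sum_pos hA i
  have := hA.1 i 0; have := hA.1 i 1; have := hv 0; have := hv 1
  simp only [mulVec, dotProduct, Fin.sum_univ_two]
  nlinarith

lemma row_le_row_or_row_le_row_of_ne_one (hA : A ∈ SL2N) (hA1 : A ≠ 1) :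
    A 1 ≤ A 0 ∨ A 0 ≤ A 1 := by
  obtain ⟨hnn, hdet⟩ := hA
  rw [det_fin_two] at hdet
  have := hnn 0 0; have := hnn 0 1; have := hnn 1 0; have := hnn 1 1
  simp only [Pi.le_def, Fin.forall_fin_two]
  by_contra! h
  obtain ⟨h₁, h₂⟩ := h
  -- Either the first column increases and the second decreases, so `det A ≤ 0`, or the
  -- reverse, and then `1 = det A ≥ A 0 1 + A 1 0 + 1` kills the off-diagonal entries.
  rcases lt_or_ge (A 0 0) (A 1 0) with h₀ | h₀
  · nlinarith [mul_le_mul h₀.le (h₂ h₀.le).le (hnn 1 1) (hnn 1 0)]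
  · have hs : A 0 1 < A 1 1 := h₁ h₀
    have hp : A 1 0 < A 0 0 := h₀.lt_of_ne fun h => (h₂ h.ge).not_gt hs
    have hq : A 0 1 = 0 := by nlinarith
    have hr : A 1 0 = 0 := by nlinarith
    have hps : A 0 0 * A 1 1 = 1 := by rw [hq] at hdet; linarith
    have hp1 : A 0 0 = 1 := Int.eq_one_of_mul_eq_one_right (hnn 0 0) hps
    have hs1 : A 1 1 = 1 := Int.eq_one_of_mul_eq_one_left (hnn 1 1) hps
    exact hA1 (by ext i j; fin_cases i <;> fin_cases j <;> simp [hp1, hq, hr, hs1])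

lemma exists_mem_eq_L_mul_or_R_mul (hA : A ∈ SL2N) (hA1 : A ≠ 1) :
    ∃ B ∈ SL2N, ∑ i, ∑ j, B i j < ∑ i, ∑ j, A i j ∧ (A = L * B ∨ A = R * B) := by
  have hrow₀ := row_sum_pos hA 0
  have hrow₁ := row_sum_pos hA 1
  have hdet := hA.2
  rw [det_fin_two] at hdet
  rcases row_le_row_or_row_le_row_of_ne_one hA hA1 with h | h
  all_goals have h₀ := h 0; have h₁ := h 1
  · refine ⟨!![A 0 0 - A 1 0, A 0 1 - A 1 1; A 1 0, A 1 1], ⟨?_, ?_⟩, ?_, Or.inl ?_⟩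
    · simp [Fin.forall_fin_two, hA.1 1 0, hA.1 1 1, h₀, h₁]
    · rw [det_fin_two_of]; linarith
    · simp only [Fin.sum_univ_two, of_apply, cons_val', cons_val_fin_one, cons_val_zero,
        cons_val_one]
      linarith
    · ext i j; fin_cases i <;> fin_cases j <;> simp [L]
  · refine ⟨!![A 0 0, A 0 1; A 1 0 - A 0 0, A 1 1 - A 0 1], ⟨?_, ?_⟩, ?_, Or.inr ?_⟩
    · simp [Fin.forall_fin_two, hA.1 0 0, hA.1 0 1, h₀, h₁]
    · rw [det_fin_two_of]; linarith
    · simp only [Fin.sum_univ_two, of_apply, cons_val', cons_val_fin_one, cons_val_zero,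
        cons_val_one]
      linarith
    · ext i j; fin_cases i <;> fin_cases j <;> simp [R]

theorem closure_L_R_eq_submonoid : Submonoid.closure {L, R} = submonoid := by
  refine le_antisymm (Submonoid.closure_le.2 ?_) fun A hA => ?_
  · rintro _ (rfl | rfl)
    exacts [L_mem, R_mem]
  induction h : (∑ i, ∑ j, A i j).toNat using Nat.strong_induction_on generalizing A with
  | _ n ih =>
  by_cases hA1 : A = 1
  · exact hA1 ▸ one_mem _
  obtain ⟨B, hB, hlt, hAB⟩ := exists_mem_eq_L_mul_or_R_mul hA hA1
  have hB₀ : 0 ≤ ∑ i, ∑ j, B i j :=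
    Finset.sum_nonneg fun i _ => Finset.sum_nonneg fun j _ => hB.1 i j
  have hBc := ih _ (by omega) B hB rfl
  rcases hAB with rfl | rfl
  exacts [mul_mem (Submonoid.subset_closure (Set.mem_insert _ _)) hBc,
    mul_mem (Submonoid.subset_closure (Set.mem_insert_of_mem _ rfl)) hBc]

lemma mem_closure_L_R_iff {A : Matrix (Fin 2) (Fin 2) ℤ} :
    A ∈ Submonoid.closure {L, R} ↔ A ∈ SL2N := by
  rw [closure_L_R_eq_submonoid, mem_submonoid]

end SL2N

open SL2N

lemma euclidStep_L_mulVec {v : Fin 2 → ℤ} (hv : ∀ i, 0 < v i) :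
    euclidStep ((L *ᵥ v) 0, (L *ᵥ v) 1) (v 0, v 1) := by
  rw [L_mulVec]
  exact Or.inl ⟨hv 1, by simp [hv 0], by simp⟩

lemma euclidStep_R_mulVec {v : Fin 2 → ℤ} (hv : ∀ i, 0 < v i) :
    euclidStep ((R *ᵥ v) 0, (R *ᵥ v) 1) (v 0, v 1) := by
  rw [R_mulVec]
  exact Or.inr ⟨hv 0, by simp [hv 1], by simp⟩

lemma eq_L_mulVec_or_R_mulVec_of_euclidStep {p q : ℤ × ℤ} (h : euclidStep p q) :
    ![p.1, p.2] = L *ᵥ ![q.1, q.2] ∨ ![p.1, p.2] = R *ᵥ ![q.1, q.2] := by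
  rcases h with ⟨-, -, rfl⟩ | ⟨-, -, rfl⟩
  · left; rw [L_mulVec]; simp
  · right; rw [R_mulVec]; simp

lemma reflTransGen_euclidStep_of_mem_closure {A : Matrix (Fin 2) (Fin 2) ℤ}
    (hA : A ∈ Submonoid.closure {L, R}) {v : Fin 2 → ℤ} (hv : ∀ i, 0 < v i) :
    Relation.ReflTransGen euclidStep ((A *ᵥ v) 0, (A *ᵥ v) 1) (v 0, v 1) := by
  induction hA using Submonoid.closure_induction generalizing v with
  | mem A hA =>
    rcases hA with rfl | rfl
    exacts [.single (euclidStep_L_mulVec hv), .single (euclidStep_R_mulVec hv)]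
  | one => simp only [one_mulVec]; exact .refl
  | mul A B _ hB ihA ihB =>
    rw [← mulVec_mulVec]
    exact (ihA (mulVec_pos (mem_closure_L_R_iff.1 hB) hv)).trans (ihB hv)

lemma exists_mem_closure_of_reflTransGen {p q : ℤ × ℤ}
    (h : Relation.ReflTransGen euclidStep p q) :
    ∃ A ∈ Submonoid.closure {L, R}, ![p.1, p.2] = A *ᵥ ![q.1, q.2] := by
  induction h using Relation.ReflTransGen.head_induction_on with
  | refl => exact ⟨1, Submonoid.one_mem _, by simp⟩
  | head hstep _ ih =>
    obtain ⟨A, hA, hAv⟩ := ih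
    rcases eq_L_mulVec_or_R_mulVec_of_euclidStep hstep with h | h
    · exact ⟨L * A, mul_mem (Submonoid.subset_closure (Set.mem_insert _ _)) hA,
        by rw [h, hAv, mulVec_mulVec]⟩
    · exact ⟨R * A, mul_mem (Submonoid.subset_closure (Set.mem_insert_of_mem _ rfl)) hA,
        by rw [h, hAv, mulVec_mulVec]⟩

theorem sl2n_orbit_iff_euclid_general (a b a₀ b₀ : ℤ) (ha₀ : 0 < a₀) (hb₀ : 0 < b₀) :
    (![a, b] ∈ SL2Norbit ![a₀, b₀]) ↔
      Relation.ReflTransGen euclidStep (a, b) (a₀, b₀) := by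
  constructor
  · rintro ⟨A, hA, hAv⟩
    have hv : ∀ i, 0 < ![a₀, b₀] i := Fin.forall_fin_two.2 ⟨ha₀, hb₀⟩
    simpa [← hAv] using reflTransGen_euclidStep_of_mem_closure (mem_closure_L_R_iff.2 hA) hv
  · intro h
    obtain ⟨A, hA, hAv⟩ := exists_mem_closure_of_reflTransGen h
    exact ⟨A, mem_closure_L_R_iff.1 hA, hAv⟩

/-- A pair `(a,b)` of positive integers lies in the `SL₂ℕ`-orbit of a pair
`(a₀,b₀)` of positive integers if and only if the subtractive Euclidean algorithm
started at `(a,b)` passes through `(a₀,b₀)`. -/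
theorem sl2n_orbit_iff_euclid (a b a₀ b₀ : ℤ)
    (ha : 0 < a) (hb : 0 < b) (ha₀ : 0 < a₀) (hb₀ : 0 < b₀) :
    (![a, b] ∈ SL2Norbit ![a₀, b₀]) ↔
      Relation.ReflTransGen euclidStep (a, b) (a₀, b₀) :=
  sl2n_orbit_iff_euclid_general a b a₀ b₀ ha₀ hb₀
end

section
/- For any two distinct SL₂ℕ-orbits in ℕ₊², either the two orbits are disjoint, or one is contained in the other. Consequently, every SL₂ℕ-invariant subset of ℕ₊² can be written uniquely as a disjoint union of SL₂ℕ-orbits. -/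
open Matrix

/-- The set `ℕ₊²` of vectors with both entries positive. -/
def PosVec : Set (Fin 2 → ℤ) := {v | 0 < v 0 ∧ 0 < v 1}

namespace SL2NAux

abbrev M2 := Matrix (Fin 2) (Fin 2) ℤ
def Lmat : M2 := !![1,0;1,1]
def Rmat : M2 := !![1,1;0,1]
def esum (A : M2) : ℤ := A 0 0 + A 0 1 + A 1 0 + A 1 1

lemma mulVec_two (A : M2) (v : Fin 2 → ℤ) (i : Fin 2) :
    A.mulVec v i = A i 0 * v 0 + A i 1 * v 1 := by
  simp [Matrix.mulVec, dotProduct, Fin.sum_univ_two]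

lemma one_mem_SL2N : (1 : M2) ∈ SL2N := by
  constructor
  · intro i j; fin_cases i <;> fin_cases j <;> simp
  · simp

lemma mul_mem_SL2N {A B : M2} (hA : A ∈ SL2N) (hB : B ∈ SL2N) : A * B ∈ SL2N := by
  obtain ⟨hA1, hA2⟩ := hA; obtain ⟨hB1, hB2⟩ := hB
  constructor
  · intro i j
    rw [Matrix.mul_apply, Fin.sum_univ_two]
    have := hA1 i 0; have := hA1 i 1; have := hB1 0 j; have := hB1 1 j
    positivity
  · rw [Matrix.det_mul, hA2, hB2]; ring

lemma mem_orbit_self (v : Fin 2 → ℤ) : v ∈ SL2Norbit v :=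
  ⟨1, one_mem_SL2N, by simp⟩

lemma orbit_mono {v w : Fin 2 → ℤ} (h : v ∈ SL2Norbit w) : SL2Norbit v ⊆ SL2Norbit w := by
  obtain ⟨B, hB, rfl⟩ := h
  rintro x ⟨A, hA, rfl⟩
  exact ⟨A * B, mul_mem_SL2N hA hB, by rw [← Matrix.mulVec_mulVec]⟩

lemma posvec_mulVec {A : M2} {v : Fin 2 → ℤ} (hA : A ∈ SL2N) (hv : v ∈ PosVec) :
    A.mulVec v ∈ PosVec := by
  obtain ⟨h1, h2⟩ := hA
  rw [Matrix.det_fin_two] at h2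
  obtain ⟨hv0, hv1⟩ := hv
  have ha := h1 0 0; have hb := h1 0 1; have hc := h1 1 0; have hd := h1 1 1
  have hr0 : 0 < A 0 0 + A 0 1 := by
    rcases eq_or_lt_of_le (by positivity : (0:ℤ) ≤ A 0 0 + A 0 1) with h | h
    · exfalso
      have e0 : A 0 0 = 0 := by omega
      have e1 : A 0 1 = 0 := by omega
      rw [e0, e1] at h2; simp at h2
    · exact h
  have hr1 : 0 < A 1 0 + A 1 1 := by
    rcases eq_or_lt_of_le (by positivity : (0:ℤ) ≤ A 1 0 + A 1 1) with h | h
    · exfalso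
      have e0 : A 1 0 = 0 := by omega
      have e1 : A 1 1 = 0 := by omega
      rw [e0, e1] at h2; simp at h2
    · exact h
  constructor <;> rw [mulVec_two] <;> nlinarith

lemma esum_pos {A : M2} (hA : A ∈ SL2N) : 0 < esum A := by
  obtain ⟨h1, h2⟩ := hA
  rw [Matrix.det_fin_two] at h2
  have ha := h1 0 0; have hb := h1 0 1; have hc := h1 1 0; have hd := h1 1 1
  unfold esum
  rcases eq_or_lt_of_le (by positivity : (0:ℤ) ≤ A 0 0 + A 0 1 + A 1 0 + A 1 1) with h | h
  · exfalso
    have e0 : A 0 0 = 0 := by omega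
    have e1 : A 0 1 = 0 := by omega
    rw [e0, e1] at h2; simp at h2
  · exact h

lemma peel {A : M2} (hA : A ∈ SL2N) :
    A = 1 ∨ ∃ A' ∈ SL2N, (A = Lmat * A' ∨ A = Rmat * A') ∧ esum A' < esum A := by
  obtain ⟨h1, h2⟩ := hA
  rw [Matrix.det_fin_two] at h2
  have ha := h1 0 0; have hb := h1 0 1; have hc := h1 1 0; have hd := h1 1 1
  have hrow0 : 0 < A 0 0 + A 0 1 := by
    rcases eq_or_lt_of_le (by positivity : (0:ℤ) ≤ A 0 0 + A 0 1) with h | h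
    · exfalso
      have e0 : A 0 0 = 0 := by omega
      have e1 : A 0 1 = 0 := by omega
      rw [e0, e1] at h2; simp at h2
    · exact h
  have hrow1 : 0 < A 1 0 + A 1 1 := by
    rcases eq_or_lt_of_le (by positivity : (0:ℤ) ≤ A 1 0 + A 1 1) with h | h
    · exfalso
      have e0 : A 1 0 = 0 := by omega
      have e1 : A 1 1 = 0 := by omega
      rw [e0, e1] at h2; simp at h2
    · exact h
  by_cases hL : A 0 0 ≤ A 1 0 ∧ A 0 1 ≤ A 1 1
  · right
    refine ⟨!![A 0 0, A 0 1; A 1 0 - A 0 0, A 1 1 - A 0 1], ⟨?_, ?_⟩, Or.inl ?_, ?_⟩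
    · intro i j; fin_cases i <;> fin_cases j <;> simp <;> omega
    · rw [Matrix.det_fin_two]; simp; ring_nf; linarith [h2]
    · rw [Matrix.eta_fin_two A, Lmat]
      norm_num [Matrix.mul_fin_two]
    · unfold esum; simp; omega
  by_cases hR : A 1 0 ≤ A 0 0 ∧ A 1 1 ≤ A 0 1
  · right
    refine ⟨!![A 0 0 - A 1 0, A 0 1 - A 1 1; A 1 0, A 1 1], ⟨?_, ?_⟩, Or.inr ?_, ?_⟩
    · intro i j; fin_cases i <;> fin_cases j <;> simp <;> omega
    · rw [Matrix.det_fin_two]; simp; ring_nf; linarith [h2]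
    · rw [Matrix.eta_fin_two A, Rmat]
      norm_num [Matrix.mul_fin_two]
    · unfold esum; simp; omega
  · left
    have key : A 1 0 < A 0 0 ∧ A 0 1 < A 1 1 := by
      rcases not_and_or.mp hL with h | h <;> rcases not_and_or.mp hR with h' | h' <;>
        push_neg at h h' <;> first
        | exact ⟨h', h⟩
        | omega
        | (exfalso; nlinarith)
    obtain ⟨k1, k2⟩ := key
    have hbc : A 0 1 + A 1 0 ≤ 0 := by nlinarith
    have hb0 : A 0 1 = 0 := by omega
    have hc0 : A 1 0 = 0 := by omega
    rw [hb0, hc0] at h2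
    have had : A 0 0 * A 1 1 = 1 := by linarith
    have := Int.mul_eq_one_iff_eq_one_or_neg_one.mp had
    have ha1 : A 0 0 = 1 := by omega
    have hd1 : A 1 1 = 1 := by omega
    rw [Matrix.eta_fin_two A, ha1, hd1, hb0, hc0, Matrix.one_fin_two]

lemma L_cancel {x y : Fin 2 → ℤ} (h : Lmat.mulVec x = Lmat.mulVec y) : x = y := by
  have h0 := congrFun h 0; have h1 := congrFun h 1
  rw [mulVec_two, mulVec_two] at h0 h1
  simp [Lmat] at h0 h1
  funext i; fin_cases i <;> simp <;> omega

lemma R_cancel {x y : Fin 2 → ℤ} (h : Rmat.mulVec x = Rmat.mulVec y) : x = y := by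
  have h0 := congrFun h 0; have h1 := congrFun h 1
  rw [mulVec_two, mulVec_two] at h0 h1
  simp [Rmat] at h0 h1
  funext i; fin_cases i <;> simp <;> omega

lemma LR_ne {x y : Fin 2 → ℤ} (hx : x ∈ PosVec) (hy : y ∈ PosVec)
    (h : Lmat.mulVec x = Rmat.mulVec y) : False := by
  obtain ⟨hx0, hx1⟩ := hx; obtain ⟨hy0, hy1⟩ := hy
  have h0 := congrFun h 0; have h1 := congrFun h 1
  rw [mulVec_two, mulVec_two] at h0 h1
  simp [Lmat, Rmat] at h0 h1
  omega

lemma key : ∀ n : ℕ, ∀ A B : M2, ∀ v w : Fin 2 → ℤ,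
    A ∈ SL2N → B ∈ SL2N → v ∈ PosVec → w ∈ PosVec →
    (esum A + esum B).toNat ≤ n → A.mulVec v = B.mulVec w →
    v ∈ SL2Norbit w ∨ w ∈ SL2Norbit v := by
  intro n
  induction n with
  | zero =>
    intro A B v w hA hB hv hw hn heq
    have := esum_pos hA; have := esum_pos hB; omega
  | succ n ih =>
    intro A B v w hA hB hv hw hn heq
    rcases peel hA with rfl | ⟨A', hA', hAe, hAlt⟩
    · left; exact ⟨B, hB, by simpa using heq⟩
    rcases peel hB with rfl | ⟨B', hB', hBe, hBlt⟩
    · right; exact ⟨A, hA, by simpa using heq.symm⟩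
    have hx := posvec_mulVec hA' hv
    have hy := posvec_mulVec hB' hw
    have hA'p := esum_pos hA'
    have hB'p := esum_pos hB'
    have hrec : (esum A' + esum B').toNat ≤ n := by omega
    rcases hAe with rfl | rfl <;> rcases hBe with rfl | rfl <;>
      rw [← Matrix.mulVec_mulVec, ← Matrix.mulVec_mulVec] at heq
    · exact ih A' B' v w hA' hB' hv hw hrec (L_cancel heq)
    · exact absurd heq (fun h => LR_ne hx hy h)
    · exact absurd heq.symm (fun h => LR_ne hy hx h)
    · exact ih A' B' v w hA' hB' hv hw hrec (R_cancel heq)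

lemma nested_or_disjoint {v w : Fin 2 → ℤ} (hv : v ∈ PosVec) (hw : w ∈ PosVec) :
    SL2Norbit v ∩ SL2Norbit w = ∅ ∨ SL2Norbit v ⊆ SL2Norbit w ∨
      SL2Norbit w ⊆ SL2Norbit v := by
  rcases Set.eq_empty_or_nonempty (SL2Norbit v ∩ SL2Norbit w) with h | ⟨x, hx1, hx2⟩
  · exact Or.inl h
  · right
    obtain ⟨A, hA, rfl⟩ := hx1
    obtain ⟨B, hB, hBx⟩ := hx2
    rcases key ((esum A + esum B).toNat) A B v w hA hB hv hw le_rfl hBx with h | h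
    · exact Or.inl (orbit_mono h)
    · exact Or.inr (orbit_mono h)

lemma orbit_sum {u v : Fin 2 → ℤ} (hu : u ∈ PosVec) (h : v ∈ SL2Norbit u) :
    u 0 + u 1 ≤ v 0 + v 1 ∧ (v 0 + v 1 = u 0 + u 1 → v = u) := by
  obtain ⟨A, ⟨h1, h2⟩, rfl⟩ := h
  rw [Matrix.det_fin_two] at h2
  obtain ⟨hu0, hu1⟩ := hu
  have ha := h1 0 0; have hb := h1 0 1; have hc := h1 1 0; have hd := h1 1 1
  have hcol0 : 1 ≤ A 0 0 + A 1 0 := by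
    rcases eq_or_lt_of_le (by positivity : (0:ℤ) ≤ A 0 0 + A 1 0) with h | h
    · exfalso
      have e0 : A 0 0 = 0 := by omega
      have e1 : A 1 0 = 0 := by omega
      rw [e0, e1] at h2; simp at h2
    · omega
  have hcol1 : 1 ≤ A 0 1 + A 1 1 := by
    rcases eq_or_lt_of_le (by positivity : (0:ℤ) ≤ A 0 1 + A 1 1) with h | h
    · exfalso
      have e0 : A 0 1 = 0 := by omega
      have e1 : A 1 1 = 0 := by omega
      rw [e0, e1] at h2; simp at h2
    · omega
  have hsum : A.mulVec u 0 + A.mulVec u 1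
      = (A 0 0 + A 1 0) * u 0 + (A 0 1 + A 1 1) * u 1 := by
    rw [mulVec_two, mulVec_two]; ring
  constructor
  · rw [hsum]; nlinarith
  · intro he
    rw [hsum] at he
    have e1 : (A 0 0 + A 1 0 - 1) * u 0 + (A 0 1 + A 1 1 - 1) * u 1 = 0 := by linarith
    have t0 : 0 ≤ (A 0 0 + A 1 0 - 1) * u 0 := mul_nonneg (by omega) hu0.le
    have t1 : 0 ≤ (A 0 1 + A 1 1 - 1) * u 1 := mul_nonneg (by omega) hu1.le
    have s0 : (A 0 0 + A 1 0 - 1) * u 0 = 0 := by linarith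
    have s1 : (A 0 1 + A 1 1 - 1) * u 1 = 0 := by linarith
    have c0 : A 0 0 + A 1 0 = 1 := by
      rcases mul_eq_zero.mp s0 with h | h
      · omega
      · omega
    have c1 : A 0 1 + A 1 1 = 1 := by
      rcases mul_eq_zero.mp s1 with h | h
      · omega
      · omega
    -- determine A entries
    have : A 0 0 = 1 ∧ A 1 0 = 0 ∧ A 0 1 = 0 ∧ A 1 1 = 1 := by
      rcases (by omega : A 0 0 = 1 ∧ A 1 0 = 0 ∨ A 0 0 = 0 ∧ A 1 0 = 1) with ⟨p, q⟩ | ⟨p, q⟩ <;>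
        rcases (by omega : A 0 1 = 1 ∧ A 1 1 = 0 ∨ A 0 1 = 0 ∧ A 1 1 = 1) with ⟨r, s⟩ | ⟨r, s⟩ <;>
          rw [p, q, r, s] at h2 <;> simp at h2 <;> exact ⟨p, q, r, s⟩
    obtain ⟨p, q, r, s⟩ := this
    funext i; fin_cases i <;> rw [mulVec_two] <;> simp [p, q, r, s]

lemma orbit_subset_I {I : Set (Fin 2 → ℤ)}
    (hInv : ∀ v ∈ I, ∀ A ∈ SL2N, A.mulVec v ∈ I) {v : Fin 2 → ℤ} (hv : v ∈ I) :
    SL2Norbit v ⊆ I := by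
  rintro x ⟨A, hA, rfl⟩
  exact hInv v hv A hA

lemma orbit_eq_of_le_sums {v w : Fin 2 → ℤ} (hv : v ∈ PosVec) (hw : w ∈ PosVec)
    (h1 : v ∈ SL2Norbit w) (h2 : v 0 + v 1 ≤ w 0 + w 1) : v = w := by
  have := orbit_sum hw h1
  exact this.2 (le_antisymm h2 this.1)

end SL2NAux

open SL2NAux in
/-- Two `SL₂ℕ`-orbits in `ℕ₊²` are disjoint or nested; consequently every
`SL₂ℕ`-invariant subset of `ℕ₊²` is in a unique way a disjoint union of orbits. -/
theorem sl2n_orbits_nested_and_unique_decomposition :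
    (∀ v ∈ PosVec, ∀ w ∈ PosVec,
      SL2Norbit v ∩ SL2Norbit w = ∅ ∨ SL2Norbit v ⊆ SL2Norbit w ∨
        SL2Norbit w ⊆ SL2Norbit v) ∧
    (∀ I : Set (Fin 2 → ℤ), I ⊆ PosVec →
      (∀ v ∈ I, ∀ A ∈ SL2N, A.mulVec v ∈ I) →
      ∃! 𝒪 : Set (Set (Fin 2 → ℤ)),
        (∀ S ∈ 𝒪, ∃ v ∈ PosVec, S = SL2Norbit v) ∧
        𝒪.Pairwise (Disjoint : Set (Fin 2 → ℤ) → Set (Fin 2 → ℤ) → Prop) ∧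
        ⋃₀ 𝒪 = I) := by
  constructor
  · exact fun v hv w hw => nested_or_disjoint hv hw
  intro I hIP hInv
  -- maximal orbits
  set O : Set (Set (Fin 2 → ℤ)) :=
    {S | ∃ v ∈ I, S = SL2Norbit v ∧
      ∀ w ∈ I, SL2Norbit v ⊆ SL2Norbit w → SL2Norbit v = SL2Norbit w} with hO
  have horbs : ∀ S ∈ O, ∃ v ∈ PosVec, S = SL2Norbit v := by
    rintro S ⟨v, hvI, rfl, _⟩
    exact ⟨v, hIP hvI, rfl⟩
  have hdisj : O.Pairwise (Disjoint : Set (Fin 2 → ℤ) → Set (Fin 2 → ℤ) → Prop) := by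
    rintro S ⟨v, hvI, rfl, hvmax⟩ T ⟨w, hwI, rfl, hwmax⟩ hne
    rw [Set.disjoint_iff_inter_eq_empty]
    rcases nested_or_disjoint (hIP hvI) (hIP hwI) with h | h | h
    · exact h
    · exact absurd (hvmax w hwI h) hne
    · exact absurd (hwmax v hvI h).symm hne
  have hunion : ⋃₀ O = I := by
    apply Set.Subset.antisymm
    · rintro x ⟨S, ⟨v, hvI, rfl, _⟩, hxS⟩
      exact orbit_subset_I hInv hvI hxS
    · intro v hvI
      -- minimize the sum over orbits containing v
      set T : Set ℕ := {n | ∃ w ∈ I, v ∈ SL2Norbit w ∧ n = (w 0 + w 1).toNat} with hT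
      have hne : T.Nonempty := ⟨(v 0 + v 1).toNat, v, hvI, mem_orbit_self v, rfl⟩
      obtain ⟨w, hwI, hvw, hwn⟩ := Nat.sInf_mem hne
      refine ⟨SL2Norbit w, ⟨w, hwI, rfl, ?_⟩, hvw⟩
      intro u huI hsub
      have hwu : w ∈ SL2Norbit u := hsub (mem_orbit_self w)
      have hle : u 0 + u 1 ≤ w 0 + w 1 := (orbit_sum (hIP huI) hwu).1
      have hvu : v ∈ SL2Norbit u := hsub hvw
      have hmem : (u 0 + u 1).toNat ∈ T := ⟨u, huI, hvu, rfl⟩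
      have hmin := Nat.sInf_le hmem
      obtain ⟨hu0, hu1⟩ := hIP huI
      obtain ⟨hw0, hw1⟩ := hIP hwI
      have : w = u := (orbit_sum (hIP huI) hwu).2 (by omega)
      rw [this]
  refine ⟨O, ⟨horbs, hdisj, hunion⟩, ?_⟩
  rintro P ⟨hPorbs, hPdisj, hPunion⟩
  apply Set.Subset.antisymm
  · -- P ⊆ O : every element of P is a maximal orbit
    intro S hS
    obtain ⟨v, hvP, rfl⟩ := hPorbs S hS
    have hvI : v ∈ I := by
      rw [← hPunion]; exact ⟨SL2Norbit v, hS, mem_orbit_self v⟩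
    refine ⟨v, hvI, rfl, ?_⟩
    intro u huI hsub
    have huU : u ∈ ⋃₀ P := by rw [hPunion]; exact huI
    obtain ⟨T, hTP, huT⟩ := huU
    obtain ⟨t, htP, rfl⟩ := hPorbs T hTP
    have hut : SL2Norbit u ⊆ SL2Norbit t := orbit_mono huT
    have hvt : SL2Norbit v ⊆ SL2Norbit t := hsub.trans hut
    have hST : SL2Norbit v = SL2Norbit t := by
      by_contra hne
      have := hPdisj hS hTP hne
      exact Set.disjoint_left.mp this (mem_orbit_self v) (hvt (mem_orbit_self v))
    exact Set.Subset.antisymm hsub (hST ▸ hut)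
  · -- O ⊆ P
    rintro S ⟨v, hvI, rfl, hvmax⟩
    have hvU : v ∈ ⋃₀ P := by rw [hPunion]; exact hvI
    obtain ⟨T, hTP, hvT⟩ := hvU
    obtain ⟨t, htP, rfl⟩ := hPorbs T hTP
    have htI : t ∈ I := by
      rw [← hPunion]; exact ⟨SL2Norbit t, hTP, mem_orbit_self t⟩
    have : SL2Norbit v = SL2Norbit t := hvmax t htI (orbit_mono hvT)
    rw [this]; exact hTP
end

section
/- For positive integers p, q and any real L > 0, the number of points (x,y) in the SL₂ℕ-orbit of (p,q) satisfying x + y ≤ L is at most L²/(2pq). -/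
open Matrix

/-!
If `A = [[a, b], [c, d]] ∈ SL₂ℕ`, the orbit point `A (p, q)` has coordinate sum `m p + n q`, where
`(m, n) = (a + c, b + d)` are the column sums of `A`, and these determine `A`: `a n - b m = 1`
with `0 ≤ a ≤ m` and `b ≥ 0` pins down `(a, b)`, as `m` and `n` are coprime. So there are at most
as many orbit points with `x + y ≤ K` (`K = ⌊L⌋`) as lattice points `(m, n)` with `m, n ≥ 1` and
`m p + n q ≤ K`. The `p × q` blocks of unit lattice points below these are disjoint and lie in the
triangle `i, j ≥ 1`, `i + j ≤ K`, which holds at most `K² / 2` lattice points, since the reflection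
`(i, j) ↦ (K + 1 - i, K + 1 - j)` maps it into its complement in `[1, K]²`.
-/

open Finset

noncomputable def trianglePoints (p q K : ℕ) : Finset (ℤ × ℤ) :=
  {x ∈ Icc 1 (K : ℤ) ×ˢ Icc 1 (K : ℤ) | x.1 * p + x.2 * q ≤ K}

lemma mem_trianglePoints {p q K : ℕ} {x : ℤ × ℤ} :
    x ∈ trianglePoints p q K ↔
      (1 ≤ x.1 ∧ x.1 ≤ K) ∧ (1 ≤ x.2 ∧ x.2 ≤ K) ∧ x.1 * p + x.2 * q ≤ K := by
  simp only [trianglePoints, mem_filter, mem_product, mem_Icc, and_assoc]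

lemma eq_of_sub_one_mul_add_eq {p m m' i i' : ℤ} (hi : 0 < i) (hip : i ≤ p) (hi' : 0 < i')
    (hi'p : i' ≤ p) (h : (m - 1) * p + i = (m' - 1) * p + i') : m = m' := by
  by_contra hne
  rcases lt_or_gt_of_ne hne with hlt | hlt <;> nlinarith

lemma card_trianglePoints_mul_le (p q K : ℕ) :
    #(trianglePoints p q K) * (p * q) ≤ #(trianglePoints 1 1 K) := by
  have hcard : #(trianglePoints p q K ×ˢ (Icc (1 : ℤ) p ×ˢ Icc (1 : ℤ) q)) =
      #(trianglePoints p q K) * (p * q) := by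
    simp [card_product]
  rw [← hcard]
  refine card_le_card_of_injOn
    (fun x => ((x.1.1 - 1) * p + x.2.1, (x.1.2 - 1) * q + x.2.2)) ?_ ?_
  · rintro ⟨⟨m, n⟩, i, j⟩ hx
    simp only [coe_product, Set.mem_prod, mem_coe, mem_trianglePoints, mem_Icc] at hx ⊢
    obtain ⟨⟨⟨hm, -⟩, ⟨hn, -⟩, hmn⟩, ⟨hi, hip⟩, hj, hjq⟩ := hx
    have hmp : 0 ≤ (m - 1) * p := mul_nonneg (by omega) (by positivity)
    have hnq : 0 ≤ (n - 1) * q := mul_nonneg (by omega) (by positivity)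
    refine ⟨⟨by omega, by nlinarith⟩, ⟨by omega, by nlinarith⟩, by push_cast; nlinarith⟩
  · rintro ⟨⟨m, n⟩, i, j⟩ hx ⟨⟨m', n'⟩, i', j'⟩ hx' h
    simp only [coe_product, Set.mem_prod, mem_coe, mem_Icc, Prod.mk.injEq] at hx hx' h
    have hm := eq_of_sub_one_mul_add_eq hx.2.1.1 hx.2.1.2 hx'.2.1.1 hx'.2.1.2 h.1
    have hn := eq_of_sub_one_mul_add_eq hx.2.2.1 hx.2.2.2 hx'.2.2.1 hx'.2.2.2 h.2
    subst hm hn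
    rw [add_left_cancel h.1, add_left_cancel h.2]

lemma two_mul_card_trianglePoints_one_le (K : ℕ) : 2 * #(trianglePoints 1 1 K) ≤ K ^ 2 := by
  set box := Icc (1 : ℤ) K ×ˢ Icc (1 : ℤ) K
  have htri : trianglePoints 1 1 K = {x ∈ box | x.1 + x.2 ≤ (K : ℤ)} := by
    simp [trianglePoints, box]
  have hreflect : #{x ∈ box | x.1 + x.2 ≤ (K : ℤ)} ≤ #{x ∈ box | ¬ x.1 + x.2 ≤ (K : ℤ)} := by
    refine card_le_card_of_injOn (fun x => (K + 1 - x.1, K + 1 - x.2)) ?_ ?_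
    · intro x hx
      simp only [box, coe_filter, mem_product, mem_Icc, Set.mem_ofPred_eq] at hx ⊢
      omega
    · intro x _ y _ h
      simp only [Prod.mk.injEq] at h
      exact Prod.ext (by omega) (by omega)
  have hsplit := card_filter_add_card_filter_not (s := box) (fun x : ℤ × ℤ => x.1 + x.2 ≤ (K : ℤ))
  have hbox : #box = K ^ 2 := by simp [box, sq]
  rw [htri]
  omega

lemma card_trianglePoints_le {p q : ℕ} (hp : 0 < p) (hq : 0 < q) (K : ℕ) :
    (#(trianglePoints p q K) : ℝ) ≤ K ^ 2 / (2 * p * q) := by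
  have h := (Nat.mul_le_mul_left 2 (card_trianglePoints_mul_le p q K)).trans
    (two_mul_card_trianglePoints_one_le K)
  rw [le_div_iff₀ (by positivity)]
  calc (#(trianglePoints p q K) : ℝ) * (2 * p * q)
      = ((2 * (#(trianglePoints p q K) * (p * q)) : ℕ) : ℝ) := by push_cast; ring
    _ ≤ ((K ^ 2 : ℕ) : ℝ) := by exact_mod_cast h
    _ = K ^ 2 := by push_cast; rfl

def colSums (A : Matrix (Fin 2) (Fin 2) ℤ) : ℤ × ℤ := (A 0 0 + A 1 0, A 0 1 + A 1 1)

lemma mulVec_zero_add_mulVec_one (A : Matrix (Fin 2) (Fin 2) ℤ) (p q : ℤ) :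
    (A *ᵥ ![p, q]) 0 + (A *ᵥ ![p, q]) 1 = (colSums A).1 * p + (colSums A).2 * q := by
  simp [mulVec, dotProduct, colSums]
  ring

lemma one_le_colSums {A : Matrix (Fin 2) (Fin 2) ℤ} (hA : A ∈ SL2N) :
    1 ≤ (colSums A).1 ∧ 1 ≤ (colSums A).2 := by
  obtain ⟨hnonneg, hdet⟩ := hA
  rw [det_fin_two] at hdet
  have := hnonneg 0 0; have := hnonneg 0 1; have := hnonneg 1 0; have := hnonneg 1 1
  constructor
  · by_contra h
    have h00 : A 0 0 = 0 := by simp only [colSums] at h; omega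
    have h10 : A 1 0 = 0 := by simp only [colSums] at h; omega
    simp [h00, h10] at hdet
  · by_contra h
    have h01 : A 0 1 = 0 := by simp only [colSums] at h; omega
    have h11 : A 1 1 = 0 := by simp only [colSums] at h; omega
    simp [h01, h11] at hdet

lemma eq_of_mul_sub_mul_eq_one {m n a b a' b' : ℤ} (ha : 0 ≤ a) (ha' : 0 ≤ a') (ham : a ≤ m)
    (ha'm : a' ≤ m) (hb : 0 ≤ b) (hb' : 0 ≤ b') (h : a * n - b * m = 1)
    (h' : a' * n - b' * m = 1) : a = a' ∧ b = b' := by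
  have hm : 0 < m := by
    by_contra hm
    obtain rfl : a = 0 := by omega
    obtain rfl : m = 0 := by omega
    simp at h
  have hpos : ∀ {a b : ℤ}, 0 ≤ a → 0 ≤ b → a * n - b * m = 1 → 0 < a := fun ha hb h => by
    rcases ha.lt_or_eq with ha | rfl
    · exact ha
    · nlinarith [mul_nonneg hb hm.le]
  have hcop : IsCoprime m n := ⟨-b, a, by linear_combination h⟩
  have hdvd : m ∣ a - a' := hcop.dvd_of_dvd_mul_right ⟨b - b', by linear_combination h - h'⟩
  have haa : a = a' := by
    have := hpos ha hb h
    have := hpos ha' hb' h'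
    have := Int.eq_zero_of_abs_lt_dvd hdvd (abs_lt.mpr ⟨by linarith, by linarith⟩)
    linarith
  subst haa
  exact ⟨rfl, mul_right_cancel₀ hm.ne' (by linarith)⟩

lemma injOn_colSums_SL2N : Set.InjOn colSums SL2N := by
  rintro A ⟨hA, hdet⟩ B ⟨hB, hdet'⟩ h
  simp only [colSums, Prod.mk.injEq] at h
  rw [det_fin_two] at hdet hdet'
  obtain ⟨h00, h01⟩ := eq_of_mul_sub_mul_eq_one (m := A 0 0 + A 1 0) (n := A 0 1 + A 1 1)
    (hA 0 0) (hB 0 0) (by linarith [hA 1 0]) (by linarith [hB 1 0]) (hA 0 1) (hB 0 1)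
    (by linear_combination hdet) (by rw [h.1, h.2]; linear_combination hdet')
  ext i j
  fin_cases i <;> fin_cases j <;> simp <;> linarith

lemma ncard_orbit_le_card_trianglePoints {p q : ℕ} (hp : 0 < p) (hq : 0 < q) (K : ℕ) :
    {w ∈ SL2Norbit ![(p : ℤ), q] | w 0 + w 1 ≤ K}.ncard ≤ #(trianglePoints p q K) := by
  set M := {A ∈ SL2N | colSums A ∈ trianglePoints p q K}
  have hMT : colSums '' M ⊆ trianglePoints p q K := by
    rintro _ ⟨A, hA, rfl⟩
    exact hA.2
  have hinj : Set.InjOn colSums M := injOn_colSums_SL2N.mono fun A hA => hA.1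
  have hM : M.Finite := Set.Finite.of_finite_image ((finite_toSet _).subset hMT) hinj
  have hsub : {w ∈ SL2Norbit ![(p : ℤ), q] | w 0 + w 1 ≤ K} ⊆ (· *ᵥ ![(p : ℤ), q]) '' M := by
    rintro w ⟨⟨A, hA, rfl⟩, hw⟩
    refine ⟨A, ⟨hA, ?_⟩, rfl⟩
    rw [mulVec_zero_add_mulVec_one] at hw
    obtain ⟨hm, hn⟩ := one_le_colSums hA
    have hp' : (1 : ℤ) ≤ p := by exact_mod_cast hp
    have hq' : (1 : ℤ) ≤ q := by exact_mod_cast hq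
    exact mem_trianglePoints.mpr ⟨⟨hm, by nlinarith⟩, ⟨hn, by nlinarith⟩, hw⟩
  calc _ ≤ ((· *ᵥ ![(p : ℤ), q]) '' M).ncard := Set.ncard_le_ncard hsub (hM.image _)
    _ ≤ M.ncard := Set.ncard_image_le hM
    _ = (colSums '' M).ncard := (hinj.ncard_image).symm
    _ ≤ (trianglePoints p q K : Set (ℤ × ℤ)).ncard := Set.ncard_le_ncard hMT (finite_toSet _)
    _ = _ := Set.ncard_coe_finset _

/-- The number of points `(x,y)` of the `SL₂ℕ`-orbit of `(p,q)` with
`x + y ≤ L` is at most `L²/(2pq)`. -/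
theorem sl2n_orbit_count_bound (p q : ℤ) (hp : 0 < p) (hq : 0 < q)
    (L : ℝ) (hL : 0 < L) :
    ((Set.ncard {w ∈ SL2Norbit ![p, q] | ((w 0 : ℝ) + (w 1 : ℝ)) ≤ L}) : ℝ) ≤
      L ^ 2 / (2 * (p : ℝ) * (q : ℝ)) := by
  lift p to ℕ using hp.le
  lift q to ℕ using hq.le
  have hfloor : {w ∈ SL2Norbit ![(p : ℤ), q] | ((w 0 : ℝ) + (w 1 : ℝ)) ≤ L} =
      {w ∈ SL2Norbit ![(p : ℤ), q] | w 0 + w 1 ≤ (⌊L⌋₊ : ℤ)} := by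
    ext w
    simp only [Set.mem_ofPred_eq, Int.natCast_floor_eq_floor hL.le, Int.le_floor, Int.cast_add]
  rw [hfloor, Int.cast_natCast, Int.cast_natCast]
  calc _ ≤ (#(trianglePoints p q ⌊L⌋₊) : ℝ) := by
        exact_mod_cast ncard_orbit_le_card_trianglePoints (by omega) (by omega) _
    _ ≤ (⌊L⌋₊ : ℝ) ^ 2 / (2 * p * q) := card_trianglePoints_le (by omega) (by omega) _
    _ ≤ L ^ 2 / (2 * p * q) := by gcongr; exact Nat.floor_le hL.le
end

section
/- Let I ⊆ ℕ₊² be a nonempty SL₂ℕ-invariant set, written as a disjoint union of orbits S_{p,q} over a set O of orbit representatives (p,q). Then the series Σ_{(p,q) ∈ O} 6/(π² p q) converges and its sum is at most 1. -/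
open Matrix

namespace SL2aux

abbrev V := Fin 2 → ℤ



noncomputable def Lm : Matrix (Fin 2) (Fin 2) ℤ := !![1,0;1,1]
noncomputable def Rm : Matrix (Fin 2) (Fin 2) ℤ := !![1,1;0,1]

lemma Lm_mem : Lm ∈ SL2N := by
  constructor
  · intro i j; fin_cases i <;> fin_cases j <;> simp [Lm]
  · simp [Lm, Matrix.det_fin_two_of]

lemma Rm_mem : Rm ∈ SL2N := by
  constructor
  · intro i j; fin_cases i <;> fin_cases j <;> simp [Rm]
  · simp [Rm, Matrix.det_fin_two_of]

lemma one_mem : (1 : Matrix (Fin 2) (Fin 2) ℤ) ∈ SL2N := by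
  constructor
  · intro i j; fin_cases i <;> fin_cases j <;> simp [Matrix.one_apply]
  · simp

lemma mul_mem {A B : Matrix (Fin 2) (Fin 2) ℤ} (hA : A ∈ SL2N) (hB : B ∈ SL2N) :
    A * B ∈ SL2N := by
  constructor
  · intro i j
    rw [Matrix.mul_apply]
    exact Finset.sum_nonneg fun k _ => mul_nonneg (hA.1 i k) (hB.1 k j)
  · rw [Matrix.det_mul, hA.2, hB.2]; ring

lemma mem_orbit_self (v : V) : v ∈ SL2Norbit v :=
  ⟨1, one_mem, by simp⟩

lemma orbit_trans {u v w : V} (huv : u ∈ SL2Norbit v) (hvw : v ∈ SL2Norbit w) :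
    u ∈ SL2Norbit w := by
  obtain ⟨A, hA, rfl⟩ := huv
  obtain ⟨B, hB, rfl⟩ := hvw
  exact ⟨A * B, mul_mem hA hB, by rw [Matrix.mulVec_mulVec]⟩

lemma mulVec0 (A : Matrix (Fin 2) (Fin 2) ℤ) (v : V) :
    A.mulVec v 0 = A 0 0 * v 0 + A 0 1 * v 1 := by
  simp [Matrix.mulVec, dotProduct, Fin.sum_univ_two]

lemma mulVec1 (A : Matrix (Fin 2) (Fin 2) ℤ) (v : V) :
    A.mulVec v 1 = A 1 0 * v 0 + A 1 1 * v 1 := by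
  simp [Matrix.mulVec, dotProduct, Fin.sum_univ_two]

lemma diag_pos {A : Matrix (Fin 2) (Fin 2) ℤ} (hA : A ∈ SL2N) :
    1 ≤ A 0 0 ∧ 1 ≤ A 1 1 := by
  obtain ⟨hpos, hdet⟩ := hA
  rw [Matrix.det_fin_two] at hdet
  have h00 := hpos 0 0; have h01 := hpos 0 1; have h10 := hpos 1 0; have h11 := hpos 1 1
  constructor
  · by_contra h
    have ha : A 0 0 = 0 := by omega
    rw [ha] at hdet; nlinarith
  · by_contra h
    have hd : A 1 1 = 0 := by omega
    rw [hd] at hdet; nlinarith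

/-- entry-sum measure -/
noncomputable def eSum (A : Matrix (Fin 2) (Fin 2) ℤ) : ℕ :=
  (A 0 0 + A 0 1 + A 1 0 + A 1 1).toNat

lemma decomp {A : Matrix (Fin 2) (Fin 2) ℤ} (hA : A ∈ SL2N) :
    A = 1 ∨ ∃ B ∈ SL2N, (A = B * Lm ∨ A = B * Rm) ∧ eSum B < eSum A := by
  obtain ⟨a, b, c, d, rfl⟩ : ∃ a b c d, A = !![a, b; c, d] :=
    ⟨A 0 0, A 0 1, A 1 0, A 1 1, Matrix.eta_fin_two A⟩
  obtain ⟨hpos, hdet⟩ := hA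
  rw [Matrix.det_fin_two] at hdet
  have h00 := hpos 0 0; have h01 := hpos 0 1; have h10 := hpos 1 0; have h11 := hpos 1 1
  simp at h00 h01 h10 h11 hdet
  by_cases hL : b ≤ a ∧ d ≤ c
  · right
    refine ⟨!![a - b, b; c - d, d], ⟨?_, ?_⟩, Or.inl ?_, ?_⟩
    · intro i j; fin_cases i <;> fin_cases j <;> simp <;> omega
    · rw [Matrix.det_fin_two_of]; nlinarith [hdet]
    · ext i j
      fin_cases i <;> fin_cases j <;>
        simp [Lm, Matrix.mul_apply, Fin.sum_univ_two] <;> ring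
    · have hbd : ¬ (b = 0 ∧ d = 0) := by
        rintro ⟨rfl, rfl⟩; simp at hdet
      simp only [eSum]
      simp
      omega
  · by_cases hR : a ≤ b ∧ c ≤ d
    · right
      refine ⟨!![a, b - a; c, d - c], ⟨?_, ?_⟩, Or.inr ?_, ?_⟩
      · intro i j; fin_cases i <;> fin_cases j <;> simp <;> omega
      · rw [Matrix.det_fin_two_of]; nlinarith [hdet]
      · ext i j
        fin_cases i <;> fin_cases j <;>
          simp [Rm, Matrix.mul_apply, Fin.sum_univ_two] <;> ring
      · have hac : ¬ (a = 0 ∧ c = 0) := by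
          rintro ⟨rfl, rfl⟩; simp at hdet
        simp only [eSum]
        simp
        omega
    · left
      rw [not_and_or] at hL hR
      push_neg at hL hR
      have h1 : a = 1 ∧ b = 0 ∧ c = 0 ∧ d = 1 := by
        rcases lt_or_ge a b with hab | hab
        · have hdc : d < c := by
            rcases hR with h | h
            · omega
            · exact h
          exfalso
          have hmul : (a + 1) * (d + 1) ≤ b * c := by
            apply mul_le_mul <;> omega
          nlinarith
        · rcases lt_or_ge b a with hba | hba
          · -- b < a; need c < d
            have hcd : c < d := by
              rcases hL with h | h
              · omega
              · exact h
            have hmul : (b + 1) * (c + 1) ≤ a * d := by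
              apply mul_le_mul <;> omega
            have hb0 : b = 0 ∧ c = 0 := by constructor <;> nlinarith
            obtain ⟨rfl, rfl⟩ := hb0
            have had : a * d = 1 := by omega
            have ha1 : a = 1 := by nlinarith
            refine ⟨ha1, rfl, rfl, by nlinarith⟩
          · -- a = b
            have hab' : a = b := le_antisymm hba hab
            exfalso
            rcases hR with h | h
            · omega
            · rcases hL with h' | h' <;> omega
      rw [show a = 1 from h1.1, show b = 0 from h1.2.1, show c = 0 from h1.2.2.1,
        show d = 1 from h1.2.2.2]
      ext i j
      fin_cases i <;> fin_cases j <;> simp [Matrix.one_apply]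

-- vectors
def Lv (u : V) : V := ![u 0, u 0 + u 1]
def Rv (u : V) : V := ![u 0 + u 1, u 1]

@[simp] lemma Lv0 (u : V) : Lv u 0 = u 0 := rfl
@[simp] lemma Lv1 (u : V) : Lv u 1 = u 0 + u 1 := rfl
@[simp] lemma Rv0 (u : V) : Rv u 0 = u 0 + u 1 := rfl
@[simp] lemma Rv1 (u : V) : Rv u 1 = u 1 := rfl

lemma Lm_mulVec (u : V) : Lm.mulVec u = Lv u := by
  funext i
  fin_cases i <;>
    simp [Lm, Lv, Matrix.mulVec, dotProduct, Fin.sum_univ_two]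

lemma Rm_mulVec (u : V) : Rm.mulVec u = Rv u := by
  funext i
  fin_cases i <;>
    simp [Rm, Rv, Matrix.mulVec, dotProduct, Fin.sum_univ_two]

lemma Lv_mem_orbit (u : V) : Lv u ∈ SL2Norbit u := ⟨Lm, Lm_mem, (Lm_mulVec u).symm⟩
lemma Rv_mem_orbit (u : V) : Rv u ∈ SL2Norbit u := ⟨Rm, Rm_mem, (Rm_mulVec u).symm⟩

lemma orbit_decomp {w u : V} (h : w ∈ SL2Norbit u) :
    w = u ∨ w ∈ SL2Norbit (Lv u) ∨ w ∈ SL2Norbit (Rv u) := by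
  obtain ⟨A, hA, rfl⟩ := h
  rcases decomp hA with rfl | ⟨B, hB, hBL, -⟩
  · left; simp
  · right
    rcases hBL with rfl | rfl
    · left; exact ⟨B, hB, by rw [← Matrix.mulVec_mulVec, Lm_mulVec]⟩
    · right; exact ⟨B, hB, by rw [← Matrix.mulVec_mulVec, Rm_mulVec]⟩

-- depth in the Stern-Brocot forest
def depth (x y : ℕ) : ℕ :=
  if 0 < x ∧ x < y then depth x (y - x) + 1
  else if 0 < y ∧ y < x then depth (x - y) y + 1
  else 0
termination_by x + y
decreasing_by all_goals omega

noncomputable def dep (v : V) : ℕ := depth (v 0).toNat (v 1).toNat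

lemma depth_left {x y : ℕ} (hx : 0 < x) (hy : 0 < y) : depth x (x + y) = depth x y + 1 := by
  rw [depth, if_pos ⟨hx, by omega⟩]
  congr 2
  omega

lemma depth_right {x y : ℕ} (hx : 0 < x) (hy : 0 < y) : depth (x + y) y = depth x y + 1 := by
  rw [depth, if_neg (by omega), if_pos ⟨hy, by omega⟩]
  congr 2
  omega

lemma dep_Lv {u : V} (h0 : 0 < u 0) (h1 : 0 < u 1) : dep (Lv u) = dep u + 1 := by
  unfold dep
  simp only [Lv0, Lv1]
  rw [show (u 0 + u 1).toNat = (u 0).toNat + (u 1).toNat by omega]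
  exact depth_left (by omega) (by omega)

lemma dep_Rv {u : V} (h0 : 0 < u 0) (h1 : 0 < u 1) : dep (Rv u) = dep u + 1 := by
  unfold dep
  simp only [Rv0, Rv1]
  rw [show (u 0 + u 1).toNat = (u 0).toNat + (u 1).toNat by omega]
  exact depth_right (by omega) (by omega)

lemma orbit_pos {A : Matrix (Fin 2) (Fin 2) ℤ} (hA : A ∈ SL2N) {u : V}
    (h0 : 0 < u 0) (h1 : 0 < u 1) : 0 < A.mulVec u 0 ∧ 0 < A.mulVec u 1 := by
  obtain ⟨ha, hd⟩ := diag_pos hA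
  have hb := hA.1 0 1; have hc := hA.1 1 0
  rw [mulVec0, mulVec1]
  constructor <;> nlinarith

/-- master induction -/
lemma master : ∀ (n : ℕ) (A : Matrix (Fin 2) (Fin 2) ℤ), A ∈ SL2N → eSum A ≤ n →
    ∀ u : V, 0 < u 0 → 0 < u 1 →
      (u 0 + u 1 ≤ A.mulVec u 0 + A.mulVec u 1) ∧
      (dep u ≤ dep (A.mulVec u)) ∧
      (u 0 ≠ u 1 → A.mulVec u 0 ≠ A.mulVec u 1) ∧
      (A ≠ 1 → u 0 + u 1 < A.mulVec u 0 + A.mulVec u 1 ∧ dep u + 1 ≤ dep (A.mulVec u)) := by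
  intro n
  induction n with
  | zero =>
    intro A hA hle u h0 h1
    exfalso
    obtain ⟨ha, hd⟩ := diag_pos hA
    have hb := hA.1 0 1; have hc := hA.1 1 0
    unfold eSum at hle
    omega
  | succ n ih =>
    intro A hA hle u h0 h1
    rcases decomp hA with rfl | ⟨B, hB, hBLR, hlt⟩
    · simp [Matrix.one_mulVec]
    · have hBn : eSum B ≤ n := by omega
      rcases hBLR with rfl | rfl
      · have hrw : (B * Lm).mulVec u = B.mulVec (Lv u) := by
          rw [← Matrix.mulVec_mulVec, Lm_mulVec]
        have hL0 : 0 < Lv u 0 := by simp [h0]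
        have hL1 : 0 < Lv u 1 := by simp; omega
        have hLd : Lv u 0 ≠ Lv u 1 := by simp; omega
        obtain ⟨hs, hdep, hne, -⟩ := ih B hB hBn (Lv u) hL0 hL1
        rw [hrw]
        refine ⟨by simp at hs ⊢; omega, ?_, fun _ => hne hLd, fun _ => ⟨by simp at hs ⊢; omega, ?_⟩⟩
        · rw [dep_Lv h0 h1] at hdep; omega
        · rw [dep_Lv h0 h1] at hdep; omega
      · have hrw : (B * Rm).mulVec u = B.mulVec (Rv u) := by
          rw [← Matrix.mulVec_mulVec, Rm_mulVec]
        have hL0 : 0 < Rv u 0 := by simp; omega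
        have hL1 : 0 < Rv u 1 := by simp [h1]
        have hLd : Rv u 0 ≠ Rv u 1 := by simp; omega
        obtain ⟨hs, hdep, hne, -⟩ := ih B hB hBn (Rv u) hL0 hL1
        rw [hrw]
        refine ⟨by simp at hs ⊢; omega, ?_, fun _ => hne hLd, fun _ => ⟨by simp at hs ⊢; omega, ?_⟩⟩
        · rw [dep_Rv h0 h1] at hdep; omega
        · rw [dep_Rv h0 h1] at hdep; omega

lemma orbit_facts {w u : V} (h : w ∈ SL2Norbit u) (h0 : 0 < u 0) (h1 : 0 < u 1) :
    (0 < w 0 ∧ 0 < w 1) ∧ dep u ≤ dep w ∧ (u 0 ≠ u 1 → w 0 ≠ w 1) ∧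
      (w ≠ u → dep u + 1 ≤ dep w) := by
  obtain ⟨A, hA, rfl⟩ := h
  have hm := master (eSum A) A hA le_rfl u h0 h1
  refine ⟨orbit_pos hA h0 h1, hm.2.1, hm.2.2.1, fun hne => ?_⟩
  have hA1 : A ≠ 1 := by
    rintro rfl
    simp [Matrix.one_mulVec] at hne
  exact (hm.2.2.2 hA1).2

lemma vec_ext {x y : V} (h0 : x 0 = y 0) (h1 : x 1 = y 1) : x = y := by
  funext i
  fin_cases i <;> assumption

noncomputable def term (v : V) : ℝ := 1 / ((v 0 : ℝ) * (v 1 : ℝ))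

lemma term_nonneg {v : V} (h0 : 0 < v 0) (h1 : 0 < v 1) : 0 ≤ term v := by
  unfold term
  positivity

lemma term_split {p : V} (h0 : 0 < p 0) (h1 : 0 < p 1) :
    term (Lv p) + term (Rv p) = term p := by
  unfold term
  simp only [Lv0, Lv1, Rv0, Rv1]
  have c0 : (0:ℝ) < (p 0 : ℝ) := by exact_mod_cast h0
  have c1 : (0:ℝ) < (p 1 : ℝ) := by exact_mod_cast h1
  push_cast
  field_simp
  ring

lemma term_Lv_le {p : V} (h0 : 0 < p 0) (h1 : 0 < p 1) : term (Lv p) ≤ term p := by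
  have h := term_split h0 h1
  have hb0 : 0 < Rv p 0 := by rw [Rv0]; omega
  have hb1 : 0 < Rv p 1 := by rw [Rv1]; omega
  have hb := term_nonneg hb0 hb1
  linarith

lemma term_Rv_le {p : V} (h0 : 0 < p 0) (h1 : 0 < p 1) : term (Rv p) ≤ term p := by
  have h := term_split h0 h1
  have hb0 : 0 < Lv p 0 := by rw [Lv0]; omega
  have hb1 : 0 < Lv p 1 := by rw [Lv1]; omega
  have hb := term_nonneg hb0 hb1
  linarith

noncomputable def meas (F : Finset V) : ℕ := ∑ v ∈ F, (v 0 + v 1).toNat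

/-- The key bound: any finite "antichain" of positive vectors (pairwise not in each
other's orbits) has `∑ 1/(pq) ≤ π²/6`. -/
lemma key : ∀ (n : ℕ) (F : Finset V),
    meas F ≤ n →
    (∀ v ∈ F, 0 < v 0 ∧ 0 < v 1) →
    (∀ v ∈ F, ∀ w ∈ F, v ≠ w → v ∉ SL2Norbit w) →
    ∑ v ∈ F, term v ≤ Real.pi ^ 2 / 6 := by
  intro n
  induction n using Nat.strong_induction_on with
  | _ n ih =>
  intro F hmeas hpos hanti
  by_cases hroot : ∀ v ∈ F, v 0 = v 1
  · -- all elements are "roots" (d, d); compare with the Basel sum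
    have hinj : ∀ x ∈ F, ∀ y ∈ F, (x 0).toNat = (y 0).toNat → x = y := by
      intro x hx y hy hxy
      have hx0 := (hpos x hx).1
      have hy0 := (hpos y hy).1
      have h0 : x 0 = y 0 := by omega
      refine vec_ext h0 ?_
      rw [← hroot x hx, ← hroot y hy]
      exact h0
    have h1 : ∑ m ∈ F.image (fun v => (v 0).toNat), (fun m : ℕ => 1 / (m : ℝ) ^ 2) m
        = ∑ v ∈ F, (fun m : ℕ => 1 / (m : ℝ) ^ 2) ((v 0).toNat) := Finset.sum_image hinj
    have h2 : ∀ v ∈ F, (1 : ℝ) / (((v 0).toNat : ℕ) : ℝ) ^ 2 = term v := by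
      intro v hv
      have h0 := (hpos v hv).1
      have hz : ((v 0).toNat : ℤ) = v 0 := Int.toNat_of_nonneg h0.le
      have hc : (((v 0).toNat : ℕ) : ℝ) = ((v 0 : ℤ) : ℝ) := by exact_mod_cast hz
      rw [term, ← hroot v hv, hc, pow_two]
    calc ∑ v ∈ F, term v
        = ∑ m ∈ F.image (fun v => (v 0).toNat), (fun m : ℕ => 1 / (m : ℝ) ^ 2) m := by
          rw [h1]
          exact (Finset.sum_congr rfl h2).symm
      _ ≤ ∑' m : ℕ, 1 / (m : ℝ) ^ 2 := by
          apply Summable.sum_le_tsum _ _ hasSum_zeta_two.summable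
          intro m _
          positivity
      _ = Real.pi ^ 2 / 6 := hasSum_zeta_two.tsum_eq
  · -- there is a non-root element; pick one of maximal depth and merge it with its parent
    push_neg at hroot
    obtain ⟨v₀, hv₀F, hv₀ne⟩ := hroot
    classical
    obtain ⟨v, hvS, hvmax⟩ := (F.filter (fun u => u 0 ≠ u 1)).exists_max_image dep
      ⟨v₀, by simp [hv₀F, hv₀ne]⟩
    have hvF : v ∈ F := (Finset.mem_filter.1 hvS).1
    have hvne : v 0 ≠ v 1 := (Finset.mem_filter.1 hvS).2
    have hv0 : 0 < v 0 := (hpos v hvF).1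
    have hv1 : 0 < v 1 := (hpos v hvF).2
    -- construct the parent p
    obtain ⟨p, hp0, hp1, hchild⟩ : ∃ p : V, 0 < p 0 ∧ 0 < p 1 ∧ (v = Lv p ∨ v = Rv p) := by
      rcases lt_or_gt_of_ne hvne with hlt | hgt
      · refine ⟨![v 0, v 1 - v 0], hv0, ?_, Or.inl ?_⟩
        · show 0 < v 1 - v 0
          omega
        · have h0 : Lv ![v 0, v 1 - v 0] 0 = v 0 := rfl
          have h1 : Lv ![v 0, v 1 - v 0] 1 = v 1 := by
            show v 0 + (v 1 - v 0) = v 1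
            ring
          exact (vec_ext h0 h1).symm
      · refine ⟨![v 0 - v 1, v 1], ?_, hv1, Or.inr ?_⟩
        · show 0 < v 0 - v 1
          omega
        · have h0 : Rv ![v 0 - v 1, v 1] 0 = v 0 := by
            show (v 0 - v 1) + v 1 = v 0
            ring
          have h1 : Rv ![v 0 - v 1, v 1] 1 = v 1 := rfl
          exact (vec_ext h0 h1).symm
    have hdepv : dep v = dep p + 1 := by
      rcases hchild with rfl | rfl
      · exact dep_Lv hp0 hp1
      · exact dep_Rv hp0 hp1
    have hmax : ∀ w ∈ F, w 0 ≠ w 1 → dep w ≤ dep p + 1 := by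
      intro w hwF hwne
      rw [← hdepv]
      exact hvmax w (Finset.mem_filter.2 ⟨hwF, hwne⟩)
    have haorb : Lv p ∈ SL2Norbit p := Lv_mem_orbit p
    have hborb : Rv p ∈ SL2Norbit p := Rv_mem_orbit p
    have hanep : Lv p ≠ p := by
      intro h
      have := congrFun h 1
      rw [Lv1] at this
      omega
    have hbnep : Rv p ≠ p := by
      intro h
      have := congrFun h 0
      rw [Rv0] at this
      omega
    have hab : Lv p ≠ Rv p := by
      intro h
      have := congrFun h 0
      rw [Lv0, Rv0] at this
      omega
    have hchildF : Lv p ∈ F ∨ Rv p ∈ F := by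
      rcases hchild with rfl | rfl
      · exact Or.inl hvF
      · exact Or.inr hvF
    have hpnotF : p ∉ F := by
      intro hpF
      rcases hchildF with hc | hc
      · exact hanti (Lv p) hc p hpF hanep haorb
      · exact hanti (Rv p) hc p hpF hbnep hborb
    set E := (F.erase (Lv p)).erase (Rv p) with hE
    have hEsub : E ⊆ F := (Finset.erase_subset _ _).trans (Finset.erase_subset _ _)
    have hpE : p ∉ E := fun h => hpnotF (hEsub h)
    have hEmem : ∀ x ∈ E, x ≠ Lv p ∧ x ≠ Rv p ∧ x ∈ F := by
      intro x hx
      have h1 := Finset.mem_erase.1 hx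
      have h2 := Finset.mem_erase.1 h1.2
      exact ⟨h2.1, h1.1, h2.2⟩
    set F' := insert p E with hF'
    -- positivity for F'
    have hpos' : ∀ x ∈ F', 0 < x 0 ∧ 0 < x 1 := by
      intro x hx
      rcases Finset.mem_insert.1 hx with rfl | hx
      · exact ⟨hp0, hp1⟩
      · exact hpos x (hEsub hx)
    -- antichain for F'
    have hanti' : ∀ x ∈ F', ∀ z ∈ F', x ≠ z → x ∉ SL2Norbit z := by
      intro x hx z hz hxz horb
      rcases Finset.mem_insert.1 hx with hxp | hxE
      · rcases Finset.mem_insert.1 hz with hzp | hzE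
        · exact hxz (hxp.trans hzp.symm)
        · -- p is in the orbit of z ∈ E : then the child of p in F is also in orbit z
          have horb' : p ∈ SL2Norbit z := hxp ▸ horb
          obtain ⟨hza, hzb, hzF⟩ := hEmem z hzE
          rcases hchildF with hc | hc
          · exact hanti (Lv p) hc z hzF (Ne.symm hza) (orbit_trans haorb horb')
          · exact hanti (Rv p) hc z hzF (Ne.symm hzb) (orbit_trans hborb horb')
      · rcases Finset.mem_insert.1 hz with hzp | hzE
        · -- x ∈ E is in the orbit of p
          have horb' : x ∈ SL2Norbit p := hzp ▸ horb
          obtain ⟨hxa, hxb, hxF⟩ := hEmem x hxE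
          rcases orbit_decomp horb' with hxp' | hx' | hx'
          · exact hpnotF (hxp' ▸ hxF)
          · -- x ∈ orbit (Lv p)
            by_cases hcF : Lv p ∈ F
            · exact hanti x hxF (Lv p) hcF hxa hx'
            · have hc0 : 0 < Lv p 0 := by rw [Lv0]; omega
              have hc1 : 0 < Lv p 1 := by rw [Lv1]; omega
              have hcne : Lv p 0 ≠ Lv p 1 := by rw [Lv0, Lv1]; omega
              obtain ⟨-, -, hne, hdep⟩ := orbit_facts hx' hc0 hc1
              have hxne : x 0 ≠ x 1 := hne hcne
              have h1 : dep x ≤ dep p + 1 := hmax x hxF hxne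
              have h2 : dep (Lv p) + 1 ≤ dep x := hdep hxa
              rw [dep_Lv hp0 hp1] at h2
              omega
          · by_cases hcF : Rv p ∈ F
            · exact hanti x hxF (Rv p) hcF hxb hx'
            · have hc0 : 0 < Rv p 0 := by rw [Rv0]; omega
              have hc1 : 0 < Rv p 1 := by rw [Rv1]; omega
              have hcne : Rv p 0 ≠ Rv p 1 := by rw [Rv0, Rv1]; omega
              obtain ⟨-, -, hne, hdep⟩ := orbit_facts hx' hc0 hc1
              have hxne : x 0 ≠ x 1 := hne hcne
              have h1 : dep x ≤ dep p + 1 := hmax x hxF hxne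
              have h2 : dep (Rv p) + 1 ≤ dep x := hdep hxb
              rw [dep_Rv hp0 hp1] at h2
              omega
        · exact hanti x (hEsub hxE) z (hEsub hzE) hxz horb
    -- measure decreases
    have hmF' : meas F' = (p 0 + p 1).toNat + meas E := Finset.sum_insert hpE
    have hmeas' : meas F' < n := by
      have hcase : ∃ c, c ∈ F ∧ (c = Lv p ∨ c = Rv p) ∧
          meas E + (c 0 + c 1).toNat ≤ meas F := by
        by_cases haF : Lv p ∈ F
        · refine ⟨Lv p, haF, Or.inl rfl, ?_⟩
          have h1 : meas E ≤ meas (F.erase (Lv p)) :=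
            Finset.sum_le_sum_of_subset (Finset.erase_subset _ _)
          have h2 : meas (F.erase (Lv p)) + ((Lv p) 0 + (Lv p) 1).toNat = meas F :=
            Finset.sum_erase_add _ _ haF
          omega
        · have hbF : Rv p ∈ F := by tauto
          refine ⟨Rv p, hbF, Or.inr rfl, ?_⟩
          have hEeq : E = F.erase (Rv p) := by
            rw [hE, Finset.erase_eq_of_notMem haF]
          have h2 : meas (F.erase (Rv p)) + ((Rv p) 0 + (Rv p) 1).toNat = meas F :=
            Finset.sum_erase_add _ _ hbF
          rw [hEeq]
          omega
      obtain ⟨c, hcF, hc, hcle⟩ := hcase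
      have hpc : (p 0 + p 1).toNat < (c 0 + c 1).toNat := by
        rcases hc with rfl | rfl
        · rw [Lv0, Lv1]; omega
        · rw [Rv0, Rv1]; omega
      omega
    -- the sum does not decrease when we merge
    have hsum : ∑ x ∈ F, term x ≤ ∑ x ∈ F', term x := by
      have hsF' : ∑ x ∈ F', term x = term p + ∑ x ∈ E, term x := Finset.sum_insert hpE
      by_cases haF : Lv p ∈ F
      · by_cases hbF : Rv p ∈ F
        · -- both children present: exact telescoping
          have hbF' : Rv p ∈ F.erase (Lv p) := Finset.mem_erase.2 ⟨fun h => hab h.symm, hbF⟩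
          have h1 : (∑ x ∈ E, term x) + term (Rv p) = ∑ x ∈ F.erase (Lv p), term x :=
            Finset.sum_erase_add _ _ hbF'
          have h2 : (∑ x ∈ F.erase (Lv p), term x) + term (Lv p) = ∑ x ∈ F, term x :=
            Finset.sum_erase_add _ _ haF
          have h3 := term_split hp0 hp1
          linarith
        · -- only left child
          have hEeq : E = F.erase (Lv p) := by
            rw [hE]
            exact Finset.erase_eq_of_notMem (fun h => hbF (Finset.mem_of_mem_erase h))
          have h2 : (∑ x ∈ F.erase (Lv p), term x) + term (Lv p) = ∑ x ∈ F, term x :=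
            Finset.sum_erase_add _ _ haF
          rw [hsF', hEeq]
          linarith [term_Lv_le hp0 hp1]
      · have hbF : Rv p ∈ F := by tauto
        have hEeq : E = F.erase (Rv p) := by
          rw [hE, Finset.erase_eq_of_notMem haF]
        have h2 : (∑ x ∈ F.erase (Rv p), term x) + term (Rv p) = ∑ x ∈ F, term x :=
          Finset.sum_erase_add _ _ hbF
        rw [hsF', hEeq]
        linarith [term_Rv_le hp0 hp1]
    calc ∑ x ∈ F, term x ≤ ∑ x ∈ F', term x := hsum
      _ ≤ Real.pi ^ 2 / 6 := ih _ hmeas' F' le_rfl hpos' hanti'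

end SL2aux

/-- If a nonempty `SL₂ℕ`-invariant set `I ⊆ ℕ₊²` is the disjoint union of the
orbits of a family `O` of representatives, then the series `Σ 6/(π²pq)` over
`(p,q) ∈ O` converges and its sum is at most `1`. -/
theorem sl2n_density_series_summable (I : Set (Fin 2 → ℤ))
    (hIne : I.Nonempty)
    (hIpos : ∀ v ∈ I, 0 < v 0 ∧ 0 < v 1)
    (hIinv : ∀ v ∈ I, ∀ A ∈ SL2N, A.mulVec v ∈ I)
    (O : Set (Fin 2 → ℤ))
    (hOpos : ∀ v ∈ O, 0 < v 0 ∧ 0 < v 1)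
    (hdisj : O.Pairwise fun v w => Disjoint (SL2Norbit v) (SL2Norbit w))
    (hunion : ⋃ v ∈ O, SL2Norbit v = I) :
    Summable (fun v : O => 6 / (Real.pi ^ 2 * ((v : Fin 2 → ℤ) 0 : ℝ) * ((v : Fin 2 → ℤ) 1 : ℝ))) ∧
      ∑' v : O, 6 / (Real.pi ^ 2 * ((v : Fin 2 → ℤ) 0 : ℝ) * ((v : Fin 2 → ℤ) 1 : ℝ)) ≤ 1 := by
  classical
  set f : O → ℝ :=
    fun v => 6 / (Real.pi ^ 2 * ((v : Fin 2 → ℤ) 0 : ℝ) * ((v : Fin 2 → ℤ) 1 : ℝ)) with hfdef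
  have hfeq : ∀ v : O, f v = 6 / Real.pi ^ 2 * SL2aux.term (v : Fin 2 → ℤ) := by
    intro v
    rw [hfdef]
    unfold SL2aux.term
    ring
  have hfnn : ∀ v : O, 0 ≤ f v := by
    intro v
    have h1 : (0 : ℝ) < ((v : Fin 2 → ℤ) 0 : ℝ) := by exact_mod_cast (hOpos _ v.2).1
    have h2 : (0 : ℝ) < ((v : Fin 2 → ℤ) 1 : ℝ) := by exact_mod_cast (hOpos _ v.2).2
    rw [hfdef]
    have hpi := Real.pi_ne_zero
    positivity
  have hbound : ∀ u : Finset O, ∑ v ∈ u, f v ≤ 1 := by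
    intro u
    have hinj : ∀ x ∈ u, ∀ y ∈ u, (x : Fin 2 → ℤ) = (y : Fin 2 → ℤ) → x = y :=
      fun x _ y _ h => Subtype.ext h
    have himg : ∑ x ∈ u.image (fun v : O => (v : Fin 2 → ℤ)), SL2aux.term x
        = ∑ v ∈ u, SL2aux.term (v : Fin 2 → ℤ) := Finset.sum_image hinj
    set F := u.image (fun v : O => (v : Fin 2 → ℤ)) with hF
    have hFpos : ∀ x ∈ F, 0 < x 0 ∧ 0 < x 1 := by
      intro x hx
      obtain ⟨v, hv, rfl⟩ := Finset.mem_image.1 hx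
      exact hOpos _ v.2
    have hFanti : ∀ x ∈ F, ∀ w ∈ F, x ≠ w → x ∉ SL2Norbit w := by
      intro x hx w hw hxw hmem
      obtain ⟨a, ha, rfl⟩ := Finset.mem_image.1 hx
      obtain ⟨b, hb, rfl⟩ := Finset.mem_image.1 hw
      have hd : Disjoint (SL2Norbit (a : Fin 2 → ℤ)) (SL2Norbit (b : Fin 2 → ℤ)) :=
        hdisj a.2 b.2 hxw
      exact Set.disjoint_left.1 hd (SL2aux.mem_orbit_self _) hmem
    have hkey := SL2aux.key (SL2aux.meas F) F le_rfl hFpos hFanti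
    calc ∑ v ∈ u, f v = ∑ v ∈ u, 6 / Real.pi ^ 2 * SL2aux.term (v : Fin 2 → ℤ) :=
          Finset.sum_congr rfl fun v _ => hfeq v
      _ = 6 / Real.pi ^ 2 * ∑ v ∈ u, SL2aux.term (v : Fin 2 → ℤ) := by
          rw [Finset.mul_sum]
      _ = 6 / Real.pi ^ 2 * ∑ x ∈ F, SL2aux.term x := by rw [himg]
      _ ≤ 6 / Real.pi ^ 2 * (Real.pi ^ 2 / 6) := by
          apply mul_le_mul_of_nonneg_left hkey
          positivity
      _ = 1 := by
          have := Real.pi_ne_zero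
          field_simp
  have hsummable : Summable f := summable_of_sum_le (fun v => hfnn v) hbound
  exact ⟨hsummable, Summable.tsum_le_of_sum_le hsummable hbound⟩
end
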